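/- arXiv:2301.08082 — 9 statements merged into one kernel-verified Lean document; each statement's English description precedes it below -/
import Mathlib

section
/- If f : X → 𝔽 is g-continuous on X ⊆ ℝ, then f is left-continuous at every point of X; moreover, if g is continuous at x ∈ X then f is continuous at x, and if g is constant on an interval [α,β] then f is constant on [α,β] ∩ X. -/
/-- `f` is `g`-continuous at `x ∈ X`: for every `ε > 0` there is `δ > 0` such that
`y ∈ X` and `|g y − g x| < δ` imply `‖f y − f x‖ < ε`. -/
def gContWithinAt {𝕜 : Type*} [RCLike 𝕜] (g : ℝ → ℝ) (f : ℝ → 𝕜) (X : Set ℝ) (x : ℝ) : Prop :=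
  ∀ ε > (0 : ℝ), ∃ δ > (0 : ℝ), ∀ y ∈ X, |g y - g x| < δ → ‖f y - f x‖ < ε

/-- If `f : X → 𝔽` is `g`-continuous on `X`, then (1) `f` is left-continuous (within `X`)
at every point of `X`; (2) if `g` is continuous at `x ∈ X` then `f` is continuous (within `X`)
at `x`; (3) if `g` is constant on `[α,β]` then `f` is constant on `[α,β] ∩ X`. -/
theorem stmt1 {𝕜 : Type*} [RCLike 𝕜] (g : ℝ → ℝ) (hg : Monotone g)
    (hlc : ∀ x : ℝ, ContinuousWithinAt g (Set.Iio x) x)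
    (X : Set ℝ) (f : ℝ → 𝕜) (hf : ∀ x ∈ X, gContWithinAt g f X x) :
    (∀ x ∈ X, ContinuousWithinAt f (X ∩ Set.Iic x) x) ∧
    (∀ x ∈ X, ContinuousAt g x → ContinuousWithinAt f X x) ∧
    (∀ α β : ℝ, α ≤ β → (∀ y ∈ Set.Icc α β, g y = g α) →
      ∀ y ∈ Set.Icc α β ∩ X, ∀ z ∈ Set.Icc α β ∩ X, f y = f z) := by
  refine ⟨?_, ?_, ?_⟩
  · intro x hx
    rw [Metric.continuousWithinAt_iff]
    intro ε hε
    obtain ⟨δ, hδ, hδ'⟩ := hf x hx ε hε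
    have := (Metric.continuousWithinAt_iff.mp (hlc x)) δ hδ
    obtain ⟨δ', hδ'pos, h'⟩ := this
    refine ⟨δ', hδ'pos, ?_⟩
    intro y hy hyd
    have hy2 : y ≤ x := hy.2
    rcases lt_or_eq_of_le hy2 with hlt | heq
    · have hgy : |g y - g x| < δ := by
        have := h' hlt hyd
        rwa [Real.dist_eq] at this
      have := hδ' y hy.1 hgy
      rwa [dist_eq_norm]
    · subst heq; simpa using hε
  · intro x hx hgc
    rw [Metric.continuousWithinAt_iff]
    intro ε hε
    obtain ⟨δ, hδ, hδ'⟩ := hf x hx ε hε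
    obtain ⟨δ', hδ'pos, h'⟩ := Metric.continuousAt_iff.mp hgc δ hδ
    refine ⟨δ', hδ'pos, fun y hy hyd => ?_⟩
    have hgy : |g y - g x| < δ := by
      have := h' hyd
      rwa [Real.dist_eq] at this
    have := hδ' y hy hgy
    rwa [dist_eq_norm]
  · intro α β hab hconst y hy z hz
    by_contra hne
    have hpos : (0:ℝ) < ‖f z - f y‖ := by
      simpa [norm_sub_pos_iff, sub_eq_zero] using (Ne.symm hne)
    obtain ⟨δ, hδ, hδ'⟩ := hf y hy.2 ‖f z - f y‖ hpos
    have hg0 : |g z - g y| < δ := by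
      rw [hconst z hz.1, hconst y hy.1]
      simpa using hδ
    exact lt_irrefl _ (hδ' z hz.2 hg0)
end

section
/- For every n ≥ 1: (1) if x ≥ x₀ then g_n(x) ≥ 0; (2) if x ≤ x₀ then g_{2n}(x) ≥ 0 and g_{2n−1}(x) ≤ 0. -/
open MeasureTheory Set Finset

/-- The jump of `g` at `x`: `Δg(x) = g(x⁺) − g(x)`. -/
noncomputable def jumpOf (g : ℝ → ℝ) (x : ℝ) : ℝ := Function.rightLim g x - g x

/-- Oriented Lebesgue–Stieltjes integral: `∫_a^b f dμ = ∫_{[a,b)} f dμ` if `a ≤ b`,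
`= −∫_{[b,a)} f dμ` otherwise. -/
noncomputable def ointeg (μ : MeasureTheory.Measure ℝ) (f : ℝ → ℝ) (a b : ℝ) : ℝ :=
  if a ≤ b then ∫ s in Set.Ico a b, f s ∂μ else - ∫ s in Set.Ico b a, f s ∂μ

/-- The `g`-monomials centered at `c`, defined from the Lebesgue–Stieltjes measure `μ` of `g`:
`g_0 ≡ 1`, `g_{n+1}(x) = (n+1) ∫_c^x g_n dμ` (oriented). -/
noncomputable def gMon (μ : MeasureTheory.Measure ℝ) (c : ℝ) : ℕ → ℝ → ℝ
  | 0 => fun _ => 1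
  | n + 1 => fun x => ((n : ℝ) + 1) * ointeg μ (gMon μ c n) c x


lemma gMon_sign (μ : MeasureTheory.Measure ℝ) (x₀ : ℝ) :
    ∀ n : ℕ, (∀ x : ℝ, x₀ ≤ x → 0 ≤ gMon μ x₀ n x) ∧
      (∀ x : ℝ, x ≤ x₀ → 0 ≤ (-1 : ℝ) ^ n * gMon μ x₀ n x) := by
  intro n
  induction n with
  | zero => constructor <;> intro x _ <;> simp [gMon]
  | succ n ih =>
    obtain ⟨ih₁, ih₂⟩ := ih
    constructor
    · intro x hx
      have h0 : (0:ℝ) ≤ (n : ℝ) + 1 := by positivity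
      apply mul_nonneg h0
      rw [ointeg, if_pos hx]
      exact MeasureTheory.setIntegral_nonneg measurableSet_Ico
        (fun s hs => ih₁ s hs.1)
    · intro x hx
      have h0 : (0:ℝ) ≤ (n : ℝ) + 1 := by positivity
      rcases eq_or_lt_of_le hx with rfl | hx'
      · simp [gMon, ointeg]
      · show 0 ≤ (-1:ℝ)^(n+1) * (((n:ℝ)+1) * ointeg μ (gMon μ x₀ n) x₀ x)
        rw [ointeg, if_neg (not_le.mpr hx')]
        have key : 0 ≤ ∫ s in Set.Ico x x₀, (-1:ℝ)^n * gMon μ x₀ n s ∂μ :=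
          MeasureTheory.setIntegral_nonneg measurableSet_Ico
            (fun s hs => ih₂ s hs.2.le)
        rw [MeasureTheory.integral_const_mul] at key
        have : (-1:ℝ)^(n+1) * (((n:ℝ)+1) * -∫ s in Set.Ico x x₀, gMon μ x₀ n s ∂μ)
            = ((n:ℝ)+1) * ((-1:ℝ)^n * ∫ s in Set.Ico x x₀, gMon μ x₀ n s ∂μ) := by
          ring
        rw [this]
        exact mul_nonneg h0 key

/-- Sign of the `g`-monomials: for `n ≥ 1`, `g_n(x) ≥ 0` when `x ≥ x₀`, while for `x ≤ x₀`
the even ones `g_{2n}` are nonnegative and the odd ones `g_{2n−1}` are nonpositive. -/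
theorem stmt2 (g : ℝ → ℝ) (μ : MeasureTheory.Measure ℝ) (x₀ : ℝ)
    (hg : Monotone g) (hlc : ∀ x : ℝ, ContinuousWithinAt g (Set.Iio x) x)
    (hμ : ∀ a b : ℝ, a ≤ b → μ (Set.Ico a b) = ENNReal.ofReal (g b - g a)) :
    ∀ n : ℕ, 1 ≤ n →
      (∀ x : ℝ, x₀ ≤ x → 0 ≤ gMon μ x₀ n x) ∧
      (∀ x : ℝ, x ≤ x₀ → 0 ≤ gMon μ x₀ (2 * n) x ∧ gMon μ x₀ (2 * n - 1) x ≤ 0) := by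
  intro n hn
  refine ⟨fun x hx => (gMon_sign μ x₀ (n)).1 x hx, fun x hx => ?_⟩
  have he := (gMon_sign μ x₀ (2*n)).2 x hx
  have ho := (gMon_sign μ x₀ (2*n-1)).2 x hx
  have heven : (-1:ℝ)^(2*n) = 1 := by
    simpa using (Even.neg_one_pow (even_two_mul n) : (-1:ℝ)^(2*n) = 1)
  have hodd : (-1:ℝ)^(2*n-1) = -1 := by
    exact Odd.neg_one_pow ⟨n-1, by omega⟩
  rw [heven, one_mul] at he
  rw [hodd, neg_one_mul] at ho
  exact ⟨he, by linarith⟩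
end

section
/- For all x ≥ x₀, all n ∈ ℕ, and all k ∈ {0,…,n}: 0 ≤ g_n(x) ≤ g_{n−k}(x) · g_k(x). In particular g_n(x) ≤ g_1(x)^n. -/
open MeasureTheory Set Finset

lemma gMon_succ (μ : Measure ℝ) (x₀ : ℝ) (n : ℕ) {x : ℝ} (hx : x₀ ≤ x) :
    gMon μ x₀ (n + 1) x = ((n : ℝ) + 1) * ∫ s in Set.Ico x₀ x, gMon μ x₀ n s ∂μ := by
  simp [gMon, ointeg, hx]

lemma gMon_zero (μ : Measure ℝ) (x₀ x : ℝ) : gMon μ x₀ 0 x = 1 := rfl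

/-- truncation of a function monotone on `Icc x₀ x` -/
lemma monoOn_integrableOn {μ : Measure ℝ} {f : ℝ → ℝ} {x₀ x : ℝ}
    (hf : MonotoneOn f (Set.Icc x₀ x)) (hx : x₀ ≤ x)
    (hfin : μ (Set.Ico x₀ x) ≠ ⊤) :
    IntegrableOn f (Set.Ico x₀ x) μ := by
  set f' : ℝ → ℝ := fun y => f (min (max x₀ y) x) with hf'
  have hmem : ∀ y : ℝ, min (max x₀ y) x ∈ Set.Icc x₀ x := fun y =>
    ⟨le_min (le_max_left _ _) hx, min_le_right _ _⟩
  have hmono' : Monotone f' := fun y z hyz =>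
    hf (hmem y) (hmem z) (min_le_min (max_le_max le_rfl hyz) le_rfl)
  have heq : Set.EqOn f' f (Set.Ico x₀ x) := fun y hy => by
    simp only [hf']
    rw [max_eq_right hy.1, min_eq_left hy.2.le]
  haveI : IsFiniteMeasure (μ.restrict (Set.Ico x₀ x)) :=
    ⟨by rwa [Measure.restrict_apply_univ, lt_top_iff_ne_top]⟩
  have h1 : IntegrableOn f' (Set.Ico x₀ x) μ := by
    refine Integrable.mono' (integrable_const (max ‖f x₀‖ ‖f x‖))
      hmono'.measurable.aestronglyMeasurable (ae_of_all _ fun y => ?_)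
    have h2 : f x₀ ≤ f' y := hf ⟨le_rfl, hx⟩ (hmem y) (hmem y).1
    have h3 : f' y ≤ f x := hf (hmem y) ⟨hx, le_rfl⟩ (hmem y).2
    rw [Real.norm_eq_abs, abs_le]
    constructor
    · calc -(max ‖f x₀‖ ‖f x‖) ≤ -‖f x₀‖ := by
            simp [neg_le_neg_iff, le_max_left]
        _ ≤ f x₀ := neg_abs_le _
        _ ≤ f' y := h2
    · exact h3.trans ((le_abs_self _).trans (le_max_right _ _))
  exact h1.congr_fun heq measurableSet_Ico

lemma prod_split {ν : Measure ℝ} [IsFiniteMeasure ν] {f h : ℝ → ℝ} {C D : ℝ}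
    (hfm : Measurable f) (hhm : Measurable h)
    (hfb : ∀ s, ‖f s‖ ≤ C) (hhb : ∀ s, ‖h s‖ ≤ D)
    (hf0 : ∀ s, 0 ≤ f s) (hh0 : ∀ s, 0 ≤ h s) :
    (∫ t, h t * (∫ s in Set.Iio t, f s ∂ν) ∂ν) +
      (∫ s, f s * (∫ t in Set.Iio s, h t ∂ν) ∂ν) ≤
    (∫ s, f s ∂ν) * (∫ t, h t ∂ν) := by
  set π := ν.prod ν with hπ
  set F : ℝ × ℝ → ℝ := fun z => f z.1 * h z.2 with hF
  have hFm : Measurable F := (hfm.comp measurable_fst).mul (hhm.comp measurable_snd)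
  have hC0 : 0 ≤ C := (norm_nonneg _).trans (hfb 0)
  have hD0 : 0 ≤ D := (norm_nonneg _).trans (hhb 0)
  have hFi : Integrable F π := by
    refine Integrable.mono' (integrable_const (C * D)) hFm.aestronglyMeasurable
      (ae_of_all _ fun z => ?_)
    rw [hF]
    simp only [norm_mul]
    exact mul_le_mul (hfb _) (hhb _) (norm_nonneg _) hC0
  set A : Set (ℝ × ℝ) := {z | z.1 < z.2} with hA
  set B : Set (ℝ × ℝ) := {z | z.2 < z.1} with hB
  set Dg : Set (ℝ × ℝ) := {z | z.1 = z.2} with hDg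
  have hAm : MeasurableSet A := measurableSet_lt measurable_fst measurable_snd
  have hBm : MeasurableSet B := measurableSet_lt measurable_snd measurable_fst
  have hDm : MeasurableSet Dg :=
    measurableSet_eq_fun measurable_fst measurable_snd
  have hunion : A ∪ (B ∪ Dg) = Set.univ := by
    ext z
    simp only [Set.mem_union, hA, hB, hDg, Set.mem_setOf_eq, Set.mem_univ, iff_true]
    rcases lt_trichotomy z.1 z.2 with h | h | h
    · exact Or.inl h
    · exact Or.inr (Or.inr h)
    · exact Or.inr (Or.inl h)
  have hdAB : Disjoint A (B ∪ Dg) := by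
    rw [Set.disjoint_left]
    rintro z hz (hz' | hz')
    · simp only [hB, Set.mem_setOf_eq] at hz'
      exact absurd (hz.trans hz') (lt_irrefl _)
    · simp only [hDg, Set.mem_setOf_eq] at hz'
      exact absurd hz' (ne_of_lt hz)
  have hdBD : Disjoint B Dg := by
    rw [Set.disjoint_left]
    intro z hz hz'
    simp only [hB, Set.mem_setOf_eq] at hz
    simp only [hDg, Set.mem_setOf_eq] at hz'
    exact absurd hz'.symm (ne_of_lt hz)
  -- split the integral
  have hsplit : ∫ z, F z ∂π =
      (∫ z in A, F z ∂π) + ((∫ z in B, F z ∂π) + (∫ z in Dg, F z ∂π)) := by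
    rw [← setIntegral_univ (μ := π) (f := F), ← hunion,
      setIntegral_union hdAB (hBm.union hDm) hFi.integrableOn hFi.integrableOn,
      setIntegral_union hdBD hDm hFi.integrableOn hFi.integrableOn]
  have hDnn : 0 ≤ ∫ z in Dg, F z ∂π :=
    setIntegral_nonneg hDm (fun z _ => mul_nonneg (hf0 _) (hh0 _))
  -- region A
  set FA : ℝ × ℝ → ℝ := fun z => (Set.Iio z.2).indicator f z.1 * h z.2 with hFA
  have hFAeq : ∀ z, A.indicator F z = FA z := by
    intro z
    by_cases hz : z.1 < z.2 <;>
      simp [hFA, hF, hA, Set.indicator_apply, Set.mem_setOf_eq, hz]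
  have hFAi : Integrable FA π := by
    have := hFi.indicator hAm
    exact this.congr (ae_of_all _ hFAeq)
  have hregA : ∫ z in A, F z ∂π = ∫ t, h t * (∫ s in Set.Iio t, f s ∂ν) ∂ν := by
    rw [← integral_indicator hAm]
    calc ∫ z, A.indicator F z ∂π = ∫ z, FA z ∂π := by
          exact integral_congr_ae (ae_of_all _ hFAeq)
      _ = ∫ t, ∫ s, FA (s, t) ∂ν ∂ν := integral_prod_symm FA hFAi
      _ = ∫ t, h t * (∫ s in Set.Iio t, f s ∂ν) ∂ν := by
          refine integral_congr_ae (ae_of_all _ fun t => ?_)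
          simp only [hFA]
          rw [integral_mul_const, integral_indicator measurableSet_Iio, mul_comm]
  -- region B
  set FB : ℝ × ℝ → ℝ := fun z => f z.1 * (Set.Iio z.1).indicator h z.2 with hFB
  have hFBeq : ∀ z, B.indicator F z = FB z := by
    intro z
    by_cases hz : z.2 < z.1 <;>
      simp [hFB, hF, hB, Set.indicator_apply, Set.mem_setOf_eq, hz]
  have hFBi : Integrable FB π := by
    have := hFi.indicator hBm
    exact this.congr (ae_of_all _ hFBeq)
  have hregB : ∫ z in B, F z ∂π = ∫ s, f s * (∫ t in Set.Iio s, h t ∂ν) ∂ν := by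
    rw [← integral_indicator hBm]
    calc ∫ z, B.indicator F z ∂π = ∫ z, FB z ∂π := by
          exact integral_congr_ae (ae_of_all _ hFBeq)
      _ = ∫ s, ∫ t, FB (s, t) ∂ν ∂ν := integral_prod FB hFBi
      _ = ∫ s, f s * (∫ t in Set.Iio s, h t ∂ν) ∂ν := by
          refine integral_congr_ae (ae_of_all _ fun s => ?_)
          simp only [hFB]
          rw [integral_const_mul, integral_indicator measurableSet_Iio]
  have hmul : ∫ z, F z ∂π = (∫ s, f s ∂ν) * (∫ t, h t ∂ν) := integral_prod_mul f h
  rw [← hmul, hsplit, hregA, hregB]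
  linarith

lemma key (g : ℝ → ℝ) (μ : Measure ℝ) (x₀ : ℝ)
    (hμ : ∀ a b : ℝ, a ≤ b → μ (Set.Ico a b) = ENNReal.ofReal (g b - g a)) :
    ∀ n : ℕ,
      (∀ y, x₀ ≤ y → 0 ≤ gMon μ x₀ n y) ∧
      MonotoneOn (gMon μ x₀ n) (Set.Ici x₀) ∧
      (∀ j k, j + k = n → ∀ y, x₀ ≤ y → gMon μ x₀ n y ≤ gMon μ x₀ j y * gMon μ x₀ k y) := by
  have hfin : ∀ {a b : ℝ}, a ≤ b → μ (Set.Ico a b) ≠ ⊤ := by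
    intro a b hab
    rw [hμ a b hab]
    exact ENNReal.ofReal_ne_top
  intro n
  induction n using Nat.strong_induction_on with
  | _ n ih =>
    match n with
    | 0 =>
      refine ⟨fun y hy => by simp [gMon], ?_, ?_⟩
      · intro u _ v _ _
        simp [gMon]
      · intro j k hjk y hy
        obtain ⟨rfl, rfl⟩ : j = 0 ∧ k = 0 := by omega
        simp [gMon]
    | (m + 1) =>
      obtain ⟨h0m, hmonom, hprodm⟩ := ih m (Nat.lt_succ_self m)
      have hnn : ∀ y, x₀ ≤ y → 0 ≤ gMon μ x₀ (m + 1) y := by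
        intro y hy
        rw [gMon_succ μ x₀ m hy]
        exact mul_nonneg (by positivity)
          (setIntegral_nonneg measurableSet_Ico fun s hs => h0m s hs.1)
      have hmono : MonotoneOn (gMon μ x₀ (m + 1)) (Set.Ici x₀) := by
        intro y hy z hz hyz
        rw [gMon_succ μ x₀ m hy, gMon_succ μ x₀ m hz]
        refine mul_le_mul_of_nonneg_left ?_ (by positivity)
        refine setIntegral_mono_set
          (monoOn_integrableOn (hmonom.mono Set.Icc_subset_Ici_self) hz (hfin hz))
          ((ae_restrict_iff' measurableSet_Ico).2 (ae_of_all _ fun s hs => h0m s hs.1))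
          (HasSubset.Subset.eventuallyLE (Set.Ico_subset_Ico_right hyz))
      refine ⟨hnn, hmono, ?_⟩
      rintro (_ | a) (_ | b) hjk y hy
      · omega
      · obtain rfl : b = m := by omega
        simp [gMon]
      · obtain rfl : a = m := by omega
        simp [gMon]
      · -- the main case
        have hm : a + b + 1 = m := by omega
        obtain ⟨h0a, hmona, -⟩ := ih a (by omega)
        obtain ⟨h0b, hmonb, -⟩ := ih b (by omega)
        set I : Set ℝ := Set.Ico x₀ y with hI
        set ν : Measure ℝ := μ.restrict I with hν
        haveI : IsFiniteMeasure ν := ⟨by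
          rw [hν, Measure.restrict_apply_univ]
          exact lt_top_iff_ne_top.2 (hfin hy)⟩
        set tr : ℝ → ℝ := fun s => min (max x₀ s) y with htrdef
        have htrmem : ∀ s, tr s ∈ Set.Icc x₀ y := fun s =>
          ⟨le_min (le_max_left _ _) hy, min_le_right _ _⟩
        have htr : Monotone tr := fun s t hst =>
          min_le_min (max_le_max le_rfl hst) le_rfl
        set f : ℝ → ℝ := fun s => gMon μ x₀ a (tr s) with hfdef
        set h : ℝ → ℝ := fun s => gMon μ x₀ b (tr s) with hhdef
        have hIcc : ∀ s, tr s ∈ Set.Ici x₀ := fun s => (htrmem s).1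
        have hfmono : Monotone f := fun s t hst =>
          hmona (hIcc s) (hIcc t) (htr hst)
        have hhmono : Monotone h := fun s t hst =>
          hmonb (hIcc s) (hIcc t) (htr hst)
        have hfm : Measurable f := hfmono.measurable
        have hhm : Measurable h := hhmono.measurable
        have hf0 : ∀ s, 0 ≤ f s := fun s => h0a _ (hIcc s)
        have hh0 : ∀ s, 0 ≤ h s := fun s => h0b _ (hIcc s)
        have hymem : y ∈ Set.Ici x₀ := hy
        have hfb : ∀ s, ‖f s‖ ≤ gMon μ x₀ a y := by
          intro s
          rw [Real.norm_eq_abs, abs_of_nonneg (hf0 s)]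
          exact hmona (hIcc s) hymem (htrmem s).2
        have hhb : ∀ s, ‖h s‖ ≤ gMon μ x₀ b y := by
          intro s
          rw [Real.norm_eq_abs, abs_of_nonneg (hh0 s)]
          exact hmonb (hIcc s) hymem (htrmem s).2
        have heqf : Set.EqOn f (gMon μ x₀ a) (Set.Icc x₀ y) := by
          intro s hs
          simp only [hfdef, htrdef]
          rw [max_eq_right hs.1, min_eq_left hs.2]
        have heqh : Set.EqOn h (gMon μ x₀ b) (Set.Icc x₀ y) := by
          intro s hs
          simp only [hhdef, htrdef]
          rw [max_eq_right hs.1, min_eq_left hs.2]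
        -- integrability over ν
        have hfi : Integrable f ν :=
          Integrable.mono' (integrable_const _) hfm.aestronglyMeasurable (ae_of_all _ hfb)
        have hhi : Integrable h ν :=
          Integrable.mono' (integrable_const _) hhm.aestronglyMeasurable (ae_of_all _ hhb)
        -- the cumulative integrals
        set Φ : ℝ → ℝ := fun t => ∫ s in Set.Iio t, f s ∂ν with hΦdef
        set Ψ : ℝ → ℝ := fun s => ∫ t in Set.Iio s, h t ∂ν with hΨdef
        have hps := prod_split hfm hhm hfb hhb hf0 hh0 (ν := ν)
        -- identify ∫ f ∂ν
        have hEf : ∫ s, f s ∂ν = ∫ s in I, gMon μ x₀ a s ∂μ := by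
          rw [hν]
          exact setIntegral_congr_fun measurableSet_Ico
            (heqf.mono (Set.Ico_subset_Icc_self))
        have hEh : ∫ s, h s ∂ν = ∫ s in I, gMon μ x₀ b s ∂μ := by
          rw [hν]
          exact setIntegral_congr_fun measurableSet_Ico
            (heqh.mono (Set.Ico_subset_Icc_self))
        have hP : gMon μ x₀ (a + 1) y = ((a : ℝ) + 1) * ∫ s, f s ∂ν := by
          rw [hEf]; exact gMon_succ μ x₀ a hy
        have hQ : gMon μ x₀ (b + 1) y = ((b : ℝ) + 1) * ∫ s, h s ∂ν := by
          rw [hEh]; exact gMon_succ μ x₀ b hy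
        -- identify Φ on I
        have hΦI : ∀ t ∈ I, ((a : ℝ) + 1) * Φ t = gMon μ x₀ (a + 1) t := by
          intro t ht
          have h1 : Φ t = ∫ s in Set.Iio t ∩ I, f s ∂μ := by
            simp only [hΦdef, hν]
            rw [Measure.restrict_restrict measurableSet_Iio]
          have h2 : Set.Iio t ∩ I = Set.Ico x₀ t := by
            ext s
            constructor
            · rintro ⟨hs1, hs2, -⟩
              exact ⟨hs2, hs1⟩
            · rintro ⟨hs1, hs2⟩
              exact ⟨hs2, hs1, hs2.trans ht.2⟩
          rw [h1, h2, setIntegral_congr_fun measurableSet_Ico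
            (heqf.mono (show Set.Ico x₀ t ⊆ Set.Icc x₀ y from fun s hs => ⟨hs.1, hs.2.le.trans ht.2.le⟩)),
            ← gMon_succ μ x₀ a ht.1]
        have hΨI : ∀ t ∈ I, ((b : ℝ) + 1) * Ψ t = gMon μ x₀ (b + 1) t := by
          intro t ht
          have h1 : Ψ t = ∫ s in Set.Iio t ∩ I, h s ∂μ := by
            simp only [hΨdef, hν]
            rw [Measure.restrict_restrict measurableSet_Iio]
          have h2 : Set.Iio t ∩ I = Set.Ico x₀ t := by
            ext s
            constructor
            · rintro ⟨hs1, hs2, -⟩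
              exact ⟨hs2, hs1⟩
            · rintro ⟨hs1, hs2⟩
              exact ⟨hs2, hs1, hs2.trans ht.2⟩
          rw [h1, h2, setIntegral_congr_fun measurableSet_Ico
            (heqh.mono (show Set.Ico x₀ t ⊆ Set.Icc x₀ y from fun s hs => ⟨hs.1, hs.2.le.trans ht.2.le⟩)),
            ← gMon_succ μ x₀ b ht.1]
        -- integrability of the products h * Φ and f * Ψ
        have hΦmono : Monotone Φ := by
          intro t t' htt'
          exact setIntegral_mono_set hfi.integrableOn (ae_of_all _ hf0)
            (HasSubset.Subset.eventuallyLE (Set.Iio_subset_Iio htt'))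
        have hΨmono : Monotone Ψ := by
          intro t t' htt'
          exact setIntegral_mono_set hhi.integrableOn (ae_of_all _ hh0)
            (HasSubset.Subset.eventuallyLE (Set.Iio_subset_Iio htt'))
        have hΦ0 : ∀ t, 0 ≤ Φ t := fun t =>
          setIntegral_nonneg measurableSet_Iio fun s _ => hf0 s
        have hΨ0 : ∀ t, 0 ≤ Ψ t := fun t =>
          setIntegral_nonneg measurableSet_Iio fun s _ => hh0 s
        have hΦb : ∀ t, Φ t ≤ ∫ s, f s ∂ν := fun t =>
          setIntegral_le_integral hfi (ae_of_all _ hf0)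
        have hΨb : ∀ t, Ψ t ≤ ∫ s, h s ∂ν := fun t =>
          setIntegral_le_integral hhi (ae_of_all _ hh0)
        have hT1i : Integrable (fun t => h t * Φ t) ν := by
          refine Integrable.mono' (integrable_const (gMon μ x₀ b y * ∫ s, f s ∂ν))
            (hhm.mul hΦmono.measurable).aestronglyMeasurable (ae_of_all _ fun t => ?_)
          rw [Real.norm_eq_abs, abs_of_nonneg (mul_nonneg (hh0 t) (hΦ0 t))]
          exact mul_le_mul (hmonb (hIcc t) hymem (htrmem t).2) (hΦb t) (hΦ0 t) (h0b y hy)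
        have hT2i : Integrable (fun s => f s * Ψ s) ν := by
          refine Integrable.mono' (integrable_const (gMon μ x₀ a y * ∫ s, h s ∂ν))
            (hfm.mul hΨmono.measurable).aestronglyMeasurable (ae_of_all _ fun t => ?_)
          rw [Real.norm_eq_abs, abs_of_nonneg (mul_nonneg (hf0 t) (hΨ0 t))]
          exact mul_le_mul (hmona (hIcc t) hymem (htrmem t).2) (hΨb t) (hΨ0 t) (h0a y hy)
        set Sm : ℝ := ∫ t in Set.Ico x₀ y, gMon μ x₀ m t ∂μ with hSmdef
        have hSm0 : 0 ≤ Sm :=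
          setIntegral_nonneg measurableSet_Ico fun s hs => h0m s hs.1
        have hN : gMon μ x₀ (m + 1) y = ((m : ℝ) + 1) * Sm := gMon_succ μ x₀ m hy
        have ha1 : (0 : ℝ) < (a : ℝ) + 1 := by positivity
        have hb1 : (0 : ℝ) < (b : ℝ) + 1 := by positivity
        have hSmi : Integrable (fun t => gMon μ x₀ m t / ((a : ℝ) + 1)) ν :=
          (monoOn_integrableOn (hmonom.mono Set.Icc_subset_Ici_self) hy (hfin hy)).div_const _
        have hSmi' : Integrable (fun t => gMon μ x₀ m t / ((b : ℝ) + 1)) ν :=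
          (monoOn_integrableOn (hmonom.mono Set.Icc_subset_Ici_self) hy (hfin hy)).div_const _
        have hmemae : ∀ᵐ t ∂ν, t ∈ I := ae_restrict_mem measurableSet_Ico
        have hT1low : ∫ t, gMon μ x₀ m t / ((a : ℝ) + 1) ∂ν ≤ ∫ t, h t * Φ t ∂ν := by
          refine integral_mono_ae hSmi hT1i ?_
          filter_upwards [hmemae] with t ht
          have h1 := hΦI t ht
          have h2 : h t = gMon μ x₀ b t := heqh (Set.Ico_subset_Icc_self ht)
          have h3 : gMon μ x₀ m t ≤ gMon μ x₀ b t * gMon μ x₀ (a + 1) t :=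
            hprodm b (a + 1) (by omega) t ht.1
          rw [div_le_iff₀ ha1]
          calc gMon μ x₀ m t ≤ gMon μ x₀ b t * gMon μ x₀ (a + 1) t := h3
            _ = h t * (((a : ℝ) + 1) * Φ t) := by rw [h2, h1]
            _ = h t * Φ t * ((a : ℝ) + 1) := by ring
        have hT2low : ∫ t, gMon μ x₀ m t / ((b : ℝ) + 1) ∂ν ≤ ∫ s, f s * Ψ s ∂ν := by
          refine integral_mono_ae hSmi' hT2i ?_
          filter_upwards [hmemae] with t ht
          have h1 := hΨI t ht
          have h2 : f t = gMon μ x₀ a t := heqf (Set.Ico_subset_Icc_self ht)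
          have h3 : gMon μ x₀ m t ≤ gMon μ x₀ a t * gMon μ x₀ (b + 1) t :=
            hprodm a (b + 1) (by omega) t ht.1
          rw [div_le_iff₀ hb1]
          calc gMon μ x₀ m t ≤ gMon μ x₀ a t * gMon μ x₀ (b + 1) t := h3
            _ = f t * (((b : ℝ) + 1) * Ψ t) := by rw [h2, h1]
            _ = f t * Ψ t * ((b : ℝ) + 1) := by ring
        have hInt1 : ∫ t, gMon μ x₀ m t / ((a : ℝ) + 1) ∂ν = Sm / ((a : ℝ) + 1) := by
          rw [integral_div]
        have hInt2 : ∫ t, gMon μ x₀ m t / ((b : ℝ) + 1) ∂ν = Sm / ((b : ℝ) + 1) := by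
          rw [integral_div]
        rw [hInt1] at hT1low
        rw [hInt2] at hT2low
        have hT1' : Sm ≤ (∫ t, h t * Φ t ∂ν) * ((a : ℝ) + 1) := (div_le_iff₀ ha1).1 hT1low
        have hT2' : Sm ≤ (∫ s, f s * Ψ s ∂ν) * ((b : ℝ) + 1) := (div_le_iff₀ hb1).1 hT2low
        have hage : ((a : ℝ) + 1) + ((b : ℝ) + 1) = (m : ℝ) + 1 := by
          have : ((a : ℕ) + b + 1 : ℕ) = (m : ℕ) := hm
          exact_mod_cast by push_cast [← this]; ring
        have goalcast : gMon μ x₀ (a + 1 + (b + 1)) y = gMon μ x₀ (m + 1) y := by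
          rw [show a + 1 + (b + 1) = m + 1 by omega]
        rw [show (a + 1 + (b + 1) : ℕ) = m + 1 by omega] at *
        rw [hN, hP, hQ]
        nlinarith [mul_le_mul_of_nonneg_left hT1' hb1.le,
          mul_le_mul_of_nonneg_left hT2' ha1.le,
          mul_le_mul_of_nonneg_left hps (mul_pos ha1 hb1).le, hage, hSm0]


/-- For `x ≥ x₀`, `n ∈ ℕ` and `0 ≤ k ≤ n`: `0 ≤ g_n(x) ≤ g_{n−k}(x)·g_k(x)`;
in particular `g_n(x) ≤ g_1(x)^n`. -/
theorem stmt3 (g : ℝ → ℝ) (μ : MeasureTheory.Measure ℝ) (x₀ : ℝ)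
    (hg : Monotone g) (hlc : ∀ x : ℝ, ContinuousWithinAt g (Set.Iio x) x)
    (hμ : ∀ a b : ℝ, a ≤ b → μ (Set.Ico a b) = ENNReal.ofReal (g b - g a)) :
    ∀ x : ℝ, x₀ ≤ x → ∀ n : ℕ,
      (∀ k ≤ n, 0 ≤ gMon μ x₀ n x ∧
        gMon μ x₀ n x ≤ gMon μ x₀ (n - k) x * gMon μ x₀ k x) ∧
      gMon μ x₀ n x ≤ (gMon μ x₀ 1 x) ^ n := by
  intro x hx n
  refine ⟨?_, ?_⟩
  · intro k hk
    obtain ⟨h1, -, h3⟩ := key g μ x₀ hμ n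
    exact ⟨h1 x hx, h3 (n - k) k (Nat.sub_add_cancel hk) x hx⟩
  · induction n with
    | zero => simp [gMon]
    | succ n ihn =>
      have h1 : gMon μ x₀ (n + 1) x ≤ gMon μ x₀ n x * gMon μ x₀ 1 x :=
        (key g μ x₀ hμ (n + 1)).2.2 n 1 rfl x hx
      have h2 : 0 ≤ gMon μ x₀ 1 x := (key g μ x₀ hμ 1).1 x hx
      calc gMon μ x₀ (n + 1) x ≤ gMon μ x₀ n x * gMon μ x₀ 1 x := h1
        _ ≤ gMon μ x₀ 1 x ^ n * gMon μ x₀ 1 x := mul_le_mul_of_nonneg_right ihn h2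
        _ = gMon μ x₀ 1 x ^ (n + 1) := (pow_succ _ _).symm
end

section
/- For all x < x₀, all n ∈ ℕ, and all k ∈ {0,…,n}: |g_n(x)| ≥ |g_{n−k}(x)| · |g_k(x)|. In particular |g_n(x)| ≥ |g_1(x)|^n. -/
open MeasureTheory Set Finset

/-!
For `x < x₀` let `ν` be `μ` restricted to `[x, x₀)`. On `[x, x₀)`, `(-1)ⁿ gₙ` is the `toReal` of
`Pₙ : ℝ → ℝ≥0∞`, where `P₀ = 1` and `Pₙ₊₁(s) = (n+1) ∫_{[s,∞)} Pₙ dν`, so it suffices to show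
`Pₐ₊₁ Pᵦ₊₁ ≤ Pₐ₊ᵦ₊₂`, by induction on `a + b`.
In `Pₐ₊₁(s) Pᵦ₊₁(s) = (a+1)(b+1) ∫_{[s,∞)} Pₐ(u) (∫_{[s,∞)} Pᵦ dν) dν(u)` split the inner
integral at `u` into `∫_{[s,u)} Pᵦ dν + Pᵦ₊₁(u)/(b+1)`; the induction hypothesis for `Pₐ Pᵦ₊₁`
bounds the product by an integral over `{t < u}` plus `(a+1) ∫_{[s,∞)} Pₐ₊ᵦ₊₁ dν`. Adding the
same bound with `a` and `b` exchanged, the integrals over `{t < u}` and `{u < t}` together are at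
most the full double integral, so `2 Pₐ₊₁ Pᵦ₊₁ ≤ Pₐ₊₁ Pᵦ₊₁ + Pₐ₊ᵦ₊₂`, and `Pₐ₊₁ Pᵦ₊₁` is
finite because `ν` is.
-/

open ENNReal
open scoped Nat

theorem lintegral_mul_setLIntegral_Iio_add_le {ν : Measure ℝ} [SFinite ν] {Φ Ψ : ℝ → ℝ≥0∞}
    (hΦ : Measurable Φ) (hΨ : Measurable Ψ) :
    ∫⁻ s, Φ s * ∫⁻ t in Iio s, Ψ t ∂ν ∂ν + ∫⁻ t, Ψ t * ∫⁻ s in Iio t, Φ s ∂ν ∂ν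
      ≤ (∫⁻ s, Φ s ∂ν) * ∫⁻ t, Ψ t ∂ν := by
  have hmeas : Measurable (Function.uncurry fun s t : ℝ => if s < t then Φ s * Ψ t else 0) :=
    Measurable.ite (measurableSet_lt measurable_fst measurable_snd)
      ((hΦ.comp measurable_fst).mul (hΨ.comp measurable_snd)) measurable_const
  have hswap : ∫⁻ t, Ψ t * ∫⁻ s in Iio t, Φ s ∂ν ∂ν = ∫⁻ s, Φ s * ∫⁻ t in Ioi s, Ψ t ∂ν ∂ν :=
    calc ∫⁻ t, Ψ t * ∫⁻ s in Iio t, Φ s ∂ν ∂ν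
        = ∫⁻ t, ∫⁻ s, (if s < t then Φ s * Ψ t else 0) ∂ν ∂ν := by
          refine lintegral_congr fun t => ?_
          rw [← lintegral_indicator measurableSet_Iio,
            ← lintegral_const_mul _ (hΦ.indicator measurableSet_Iio)]
          simp only [indicator_apply, Set.mem_Iio, mul_ite, mul_zero, mul_comm]
      _ = ∫⁻ s, ∫⁻ t, (if s < t then Φ s * Ψ t else 0) ∂ν ∂ν :=
          (lintegral_lintegral_swap hmeas.aemeasurable).symm
      _ = ∫⁻ s, Φ s * ∫⁻ t in Ioi s, Ψ t ∂ν ∂ν := by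
          refine lintegral_congr fun s => ?_
          rw [← lintegral_indicator measurableSet_Ioi,
            ← lintegral_const_mul _ (hΨ.indicator measurableSet_Ioi)]
          simp only [indicator_apply, Set.mem_Ioi, mul_ite, mul_zero]
  rw [hswap]
  calc _ ≤ ∫⁻ s, Φ s * ∫⁻ t in Iio s, Ψ t ∂ν + Φ s * ∫⁻ t in Ioi s, Ψ t ∂ν ∂ν :=
        le_lintegral_add _ _
    _ ≤ ∫⁻ s, Φ s * ∫⁻ t, Ψ t ∂ν ∂ν := by
      refine lintegral_mono fun s => ?_
      rw [← mul_add, ← lintegral_union measurableSet_Ioi Ioi_disjoint_Iio_same.symm]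
      exact mul_le_mul_right (setLIntegral_le_lintegral _ _) _
    _ = _ := lintegral_mul_const _ hΦ

theorem setLIntegral_Ici_eq_add {ν : Measure ℝ} {s u : ℝ} (h : s ≤ u) (f : ℝ → ℝ≥0∞) :
    ∫⁻ t in Ici s, f t ∂ν = ∫⁻ t in Iio u, f t ∂(ν.restrict (Ici s)) + ∫⁻ t in Ici u, f t ∂ν := by
  rw [← lintegral_add_compl f measurableSet_Iio, compl_Iio,
    Measure.restrict_restrict measurableSet_Ici, Set.inter_eq_left.2 (Set.Ici_subset_Ici.2 h)]

noncomputable def tailMonomial (ν : Measure ℝ) : ℕ → ℝ → ℝ≥0∞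
  | 0 => fun _ => 1
  | n + 1 => fun s => (n + 1) * ∫⁻ t in Ici s, tailMonomial ν n t ∂ν

namespace tailMonomial

variable {ν : Measure ℝ}

@[simp]
theorem zero_apply (s : ℝ) : tailMonomial ν 0 s = 1 := rfl

theorem succ_apply (n : ℕ) (s : ℝ) :
    tailMonomial ν (n + 1) s = (n + 1) * ∫⁻ t in Ici s, tailMonomial ν n t ∂ν := rfl

theorem antitone (n : ℕ) : Antitone (tailMonomial ν n) := by
  cases n with
  | zero => exact fun _ _ _ => le_rfl
  | succ n =>
    intro s u hsu
    rw [succ_apply, succ_apply]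
    gcongr

theorem measurable (n : ℕ) : Measurable (tailMonomial ν n) := (antitone n).measurable

theorem le_factorial_mul (n : ℕ) (s : ℝ) : tailMonomial ν n s ≤ n ! * ν univ ^ n := by
  induction n generalizing s with
  | zero => simp
  | succ n ih =>
    calc tailMonomial ν (n + 1) s
        ≤ (n + 1) * ∫⁻ _ in Ici s, (n ! * ν univ ^ n : ℝ≥0∞) ∂ν := by
          rw [succ_apply]; gcongr with t; exact ih t
      _ ≤ (n + 1) * (n ! * ν univ ^ n * ν univ) := by
          rw [setLIntegral_const]; gcongr; exact subset_univ _
      _ = (n + 1)! * ν univ ^ (n + 1) := by push_cast [Nat.factorial_succ]; ring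

theorem ne_top [IsFiniteMeasure ν] (n : ℕ) (s : ℝ) : tailMonomial ν n s ≠ ∞ :=
  ne_top_of_le_ne_top (mul_ne_top (natCast_ne_top _) (pow_ne_top (measure_ne_top ν univ)))
    (le_factorial_mul n s)

theorem mul_lintegral_le {a b n : ℕ}
    (h : ∀ u, tailMonomial ν a u * tailMonomial ν (b + 1) u ≤ tailMonomial ν n u) (s : ℝ) :
    (b + 1) * ((∫⁻ t in Ici s, tailMonomial ν a t ∂ν) * ∫⁻ t in Ici s, tailMonomial ν b t ∂ν)
      ≤ (b + 1) * ∫⁻ u in Ici s, tailMonomial ν a u *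
            ∫⁻ t in Iio u, tailMonomial ν b t ∂(ν.restrict (Ici s)) ∂ν
        + ∫⁻ u in Ici s, tailMonomial ν n u ∂ν :=
  calc (b + 1) * ((∫⁻ t in Ici s, tailMonomial ν a t ∂ν) * ∫⁻ t in Ici s, tailMonomial ν b t ∂ν)
      = ∫⁻ u in Ici s,
          tailMonomial ν a u * ((b + 1) * ∫⁻ t in Ici s, tailMonomial ν b t ∂ν) ∂ν := by
        rw [lintegral_mul_const _ (measurable a)]; ring
    _ = ∫⁻ u in Ici s, (b + 1) * (tailMonomial ν a u *
            ∫⁻ t in Iio u, tailMonomial ν b t ∂(ν.restrict (Ici s)))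
          + tailMonomial ν a u * tailMonomial ν (b + 1) u ∂ν := by
        refine setLIntegral_congr_fun measurableSet_Ici fun u hu => ?_
        rw [setLIntegral_Ici_eq_add hu, succ_apply b u]; ring
    _ = (b + 1) * ∫⁻ u in Ici s, tailMonomial ν a u *
            ∫⁻ t in Iio u, tailMonomial ν b t ∂(ν.restrict (Ici s)) ∂ν
          + ∫⁻ u in Ici s, tailMonomial ν a u * tailMonomial ν (b + 1) u ∂ν := by
        rw [lintegral_add_right _ ((measurable a).fun_mul (measurable (b + 1))),
          lintegral_const_mul' _ _ (add_ne_top.2 ⟨natCast_ne_top b, one_ne_top⟩)]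
    _ ≤ _ := by gcongr with u; exact h u

theorem succ_mul_succ_le [IsFiniteMeasure ν] {a b : ℕ}
    (h : ∀ k m, k + m = a + b + 1 → ∀ u,
      tailMonomial ν k u * tailMonomial ν m u ≤ tailMonomial ν (a + b + 1) u) (s : ℝ) :
    tailMonomial ν (a + 1) s * tailMonomial ν (b + 1) s ≤ tailMonomial ν (a + b + 2) s := by
  have hab := mul_lintegral_le (h a (b + 1) (by omega)) s
  have hba := mul_lintegral_le (h b (a + 1) (by omega)) s
  have hT := lintegral_mul_setLIntegral_Iio_add_le (ν := ν.restrict (Ici s)) (measurable (ν := ν) a)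
    (measurable (ν := ν) b)
  have hX : tailMonomial ν (a + 1) s * tailMonomial ν (b + 1) s ≠ ∞ :=
    mul_ne_top (ne_top _ _) (ne_top _ _)
  rw [succ_apply, succ_apply] at hX ⊢
  rw [succ_apply (a + b + 1)]
  set La := ∫⁻ t in Ici s, tailMonomial ν a t ∂ν
  set Lb := ∫⁻ t in Ici s, tailMonomial ν b t ∂ν
  set J := ∫⁻ t in Ici s, tailMonomial ν (a + b + 1) t ∂ν
  set Tab := ∫⁻ u in Ici s, tailMonomial ν a u *
    ∫⁻ t in Iio u, tailMonomial ν b t ∂(ν.restrict (Ici s)) ∂ν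
  set Tba := ∫⁻ u in Ici s, tailMonomial ν b u *
    ∫⁻ t in Iio u, tailMonomial ν a t ∂(ν.restrict (Ici s)) ∂ν
  refine (ENNReal.add_le_add_iff_left hX).1 ?_
  calc _ = (a + 1) * ((b + 1) * (La * Lb)) + (b + 1) * ((a + 1) * (Lb * La)) := by ring
    _ ≤ (a + 1) * ((b + 1) * Tab + J) + (b + 1) * ((a + 1) * Tba + J) := by gcongr
    _ = (a + 1) * (b + 1) * (Tab + Tba) + (a + 1 + (b + 1)) * J := by ring
    _ ≤ (a + 1) * (b + 1) * (La * Lb) + (a + 1 + (b + 1)) * J := by gcongr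
    _ = _ := by push_cast; ring

theorem mul_le [IsFiniteMeasure ν] (k m : ℕ) (s : ℝ) :
    tailMonomial ν k s * tailMonomial ν m s ≤ tailMonomial ν (k + m) s := by
  suffices H : ∀ n k m, k + m = n → ∀ s,
      tailMonomial ν k s * tailMonomial ν m s ≤ tailMonomial ν n s from H _ k m rfl s
  intro n
  induction n with
  | zero =>
    intro k m h s
    obtain ⟨rfl, rfl⟩ : k = 0 ∧ m = 0 := by omega
    simp
  | succ n ih =>
    rintro (_ | a) (_ | b) h s
    · omega
    · rw [zero_add] at h; rw [h, zero_apply, one_mul]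
    · rw [add_zero] at h; rw [h, zero_apply, mul_one]
    · obtain rfl : n = a + b + 1 := by omega
      exact succ_mul_succ_le ih s

theorem one_pow_le [IsFiniteMeasure ν] (n : ℕ) (s : ℝ) :
    tailMonomial ν 1 s ^ n ≤ tailMonomial ν n s := by
  induction n with
  | zero => simp
  | succ n ih =>
    calc tailMonomial ν 1 s ^ (n + 1) = tailMonomial ν 1 s ^ n * tailMonomial ν 1 s := pow_succ _ _
      _ ≤ tailMonomial ν n s * tailMonomial ν 1 s := by gcongr
      _ ≤ tailMonomial ν (n + 1) s := mul_le n 1 s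

end tailMonomial

theorem gMon_eq_neg_one_pow_mul_toReal_tailMonomial {μ : Measure ℝ} {x x₀ : ℝ}
    (hfin : μ (Ico x x₀) ≠ ∞) (n : ℕ) :
    ∀ s ∈ Ico x x₀,
      gMon μ x₀ n s = (-1) ^ n * (tailMonomial (μ.restrict (Ico x x₀)) n s).toReal := by
  have : IsFiniteMeasure (μ.restrict (Ico x x₀)) := isFiniteMeasure_restrict.2 hfin
  induction n with
  | zero => simp [gMon]
  | succ n ih =>
    intro s hs
    have hIco : Ici s ∩ Ico x x₀ = Ico s x₀ := by
      rw [← Ici_inter_Iio, ← inter_assoc, Ici_inter_Ici, sup_eq_left.2 hs.1, Ici_inter_Iio]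
    have hint : ∫ t in Ico s x₀, gMon μ x₀ n t ∂μ
        = (-1) ^ n * (∫⁻ t in Ico s x₀, tailMonomial (μ.restrict (Ico x x₀)) n t ∂μ).toReal := by
      rw [setIntegral_congr_fun measurableSet_Ico fun t ht => ih t ⟨hs.1.trans ht.1, ht.2⟩,
        integral_const_mul, integral_toReal (tailMonomial.measurable n).aemeasurable
          (ae_of_all _ fun t => (tailMonomial.ne_top n t).lt_top)]
    simp only [gMon, ointeg, if_neg (not_le.2 hs.2)]
    rw [hint, tailMonomial.succ_apply,
      Measure.restrict_restrict measurableSet_Ici, hIco, toReal_mul,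
      toReal_add (natCast_ne_top n) one_ne_top, toReal_natCast, toReal_one]
    ring

theorem abs_gMon_eq_toReal_tailMonomial {μ : Measure ℝ} {x x₀ : ℝ} (hx : x < x₀)
    (hfin : μ (Ico x x₀) ≠ ∞) (n : ℕ) :
    |gMon μ x₀ n x| = (tailMonomial (μ.restrict (Ico x x₀)) n x).toReal := by
  rw [gMon_eq_neg_one_pow_mul_toReal_tailMonomial hfin n x ⟨le_rfl, hx⟩, abs_mul, abs_pow,
    abs_neg, abs_one, one_pow, one_mul, abs_of_nonneg toReal_nonneg]

theorem stmt4_general (g : ℝ → ℝ) (μ : MeasureTheory.Measure ℝ) (x₀ : ℝ)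
    (hμ : ∀ a b : ℝ, a ≤ b → μ (Set.Ico a b) = ENNReal.ofReal (g b - g a)) :
    ∀ x : ℝ, x < x₀ → ∀ n : ℕ,
      (∀ k ≤ n, |gMon μ x₀ (n - k) x| * |gMon μ x₀ k x| ≤ |gMon μ x₀ n x|) ∧
      |gMon μ x₀ 1 x| ^ n ≤ |gMon μ x₀ n x| := by
  intro x hx n
  have hfin : μ (Ico x x₀) ≠ ∞ := by
    rw [hμ x x₀ hx.le]
    exact ofReal_ne_top
  have : IsFiniteMeasure (μ.restrict (Ico x x₀)) := isFiniteMeasure_restrict.2 hfin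
  simp only [abs_gMon_eq_toReal_tailMonomial hx hfin, ← toReal_mul, ← toReal_pow]
  refine ⟨fun k hk => ?_, toReal_mono (tailMonomial.ne_top n x) (tailMonomial.one_pow_le n x)⟩
  refine toReal_mono (tailMonomial.ne_top n x) ?_
  simpa only [Nat.sub_add_cancel hk] using tailMonomial.mul_le (n - k) k x

/-- For `x < x₀`, `n ∈ ℕ` and `0 ≤ k ≤ n`: `|g_n(x)| ≥ |g_{n−k}(x)|·|g_k(x)|`;
in particular `|g_n(x)| ≥ |g_1(x)|^n`. -/
theorem stmt4 (g : ℝ → ℝ) (μ : MeasureTheory.Measure ℝ) (x₀ : ℝ)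
    (hg : Monotone g) (hlc : ∀ x : ℝ, ContinuousWithinAt g (Set.Iio x) x)
    (hμ : ∀ a b : ℝ, a ≤ b → μ (Set.Ico a b) = ENNReal.ofReal (g b - g a)) :
    ∀ x : ℝ, x < x₀ → ∀ n : ℕ,
      (∀ k ≤ n, |gMon μ x₀ (n - k) x| * |gMon μ x₀ k x| ≤ |gMon μ x₀ n x|) ∧
      |gMon μ x₀ 1 x| ^ n ≤ |gMon μ x₀ n x| :=
  stmt4_general g μ x₀ hμ
end

section
/- For all x ≤ x₀ and all n ∈ ℕ: |g_n(x)| ≤ n! · |g_1(x)|^n. -/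
open MeasureTheory Set Finset

/-! For `x ≤ x₀` one has `|g_1(x)| = μ[x, x₀)`, which decreases as `x` moves right. So on `[x, x₀)`
the induction hypothesis bounds `g_n` by `n! |g_1(x)|^n`, and integrating over `[x, x₀)` contributes
one more factor `μ[x, x₀) = |g_1(x)|`. -/

open scoped Nat

theorem ointeg_of_le (μ : Measure ℝ) (f : ℝ → ℝ) {a b : ℝ} (hba : b ≤ a) :
    ointeg μ f a b = -∫ s in Ico b a, f s ∂μ := by
  rcases hba.lt_or_eq with hlt | rfl
  · simp [ointeg, hlt.not_ge]
  · simp [ointeg]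

section LeftOfCenter

variable (μ : Measure ℝ) {x₀ x : ℝ}

theorem abs_gMon_one_of_le (hx : x ≤ x₀) : |gMon μ x₀ 1 x| = μ.real (Ico x x₀) := by
  simp [gMon, ointeg_of_le μ _ hx]

theorem abs_gMon_succ_of_le (n : ℕ) (hx : x ≤ x₀) :
    |gMon μ x₀ (n + 1) x| = (n + 1) * |∫ t in Ico x x₀, gMon μ x₀ n t ∂μ| := by
  simp only [gMon]
  rw [ointeg_of_le μ _ hx, abs_mul, abs_neg, abs_of_nonneg (by positivity)]

theorem abs_gMon_le_factorial_mul_pow (hfin : ∀ x ≤ x₀, μ (Ico x x₀) < ⊤) (hx : x ≤ x₀)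
    (n : ℕ) : |gMon μ x₀ n x| ≤ n ! * |gMon μ x₀ 1 x| ^ n := by
  induction n generalizing x with
  | zero => simp [gMon]
  | succ n ih =>
    have hbound : ∀ t ∈ Ico x x₀, ‖gMon μ x₀ n t‖ ≤ n ! * |gMon μ x₀ 1 x| ^ n := by
      intro t ht
      have hmono : |gMon μ x₀ 1 t| ≤ |gMon μ x₀ 1 x| := by
        rw [abs_gMon_one_of_le μ ht.2.le, abs_gMon_one_of_le μ hx]
        exact measureReal_mono (Ico_subset_Ico_left ht.1) (hfin x hx).ne
      calc ‖gMon μ x₀ n t‖ ≤ n ! * |gMon μ x₀ 1 t| ^ n := ih ht.2.le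
        _ ≤ n ! * |gMon μ x₀ 1 x| ^ n := by gcongr
    calc |gMon μ x₀ (n + 1) x|
        = (n + 1) * ‖∫ t in Ico x x₀, gMon μ x₀ n t ∂μ‖ := abs_gMon_succ_of_le μ n hx
      _ ≤ (n + 1) * (n ! * |gMon μ x₀ 1 x| ^ n * μ.real (Ico x x₀)) := by
        gcongr
        exact norm_setIntegral_le_of_norm_le_const (hfin x hx) hbound
      _ = (n + 1)! * |gMon μ x₀ 1 x| ^ (n + 1) := by
        rw [← abs_gMon_one_of_le μ hx, Nat.factorial_succ]
        push_cast
        ring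

end LeftOfCenter

theorem stmt5_general (g : ℝ → ℝ) (μ : MeasureTheory.Measure ℝ) (x₀ : ℝ)
    (hμ : ∀ a b : ℝ, a ≤ b → μ (Set.Ico a b) = ENNReal.ofReal (g b - g a)) :
    ∀ x : ℝ, x ≤ x₀ → ∀ n : ℕ,
      |gMon μ x₀ n x| ≤ (Nat.factorial n : ℝ) * |gMon μ x₀ 1 x| ^ n := by
  intro x hx n
  have hfin : ∀ y ≤ x₀, μ (Ico y x₀) < ⊤ := fun y hy => by
    rw [hμ y x₀ hy]
    exact ENNReal.ofReal_lt_top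
  exact abs_gMon_le_factorial_mul_pow μ hfin hx n

/-- For `x ≤ x₀` and all `n ∈ ℕ`: `|g_n(x)| ≤ n! · |g_1(x)|^n`. -/
theorem stmt5 (g : ℝ → ℝ) (μ : MeasureTheory.Measure ℝ) (x₀ : ℝ)
    (hg : Monotone g) (hlc : ∀ x : ℝ, ContinuousWithinAt g (Set.Iio x) x)
    (hμ : ∀ a b : ℝ, a ≤ b → μ (Set.Ico a b) = ENNReal.ofReal (g b - g a)) :
    ∀ x : ℝ, x ≤ x₀ → ∀ n : ℕ,
      |gMon μ x₀ n x| ≤ (Nat.factorial n : ℝ) * |gMon μ x₀ 1 x| ^ n :=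
  stmt5_general g μ x₀ hμ
end

section
/- For the derivator g with g(x) = 0 for x > −1 and g(x) = −h for x ≤ −1 (h > 0), the g-monomials centered at 0 satisfy g_n(x) = 0 for x > −1 and g_n(x) = n!(−h)^n for x ≤ −1; in particular g_n(x) = n! g_1(x)^n for x ≤ 0, so the factorial bound in the left-side estimate is attained. -/
open MeasureTheory Set Finset

/-- For the step derivator `g(x) = −h` for `x ≤ −1`, `g(x) = 0` for `x > −1` (`h > 0`),
the `g`-monomials centered at `0` satisfy: `g_n(x) = 0` for `x > −1` (`n ≥ 1`),
`g_n(x) = n!·(−h)^n` for `x ≤ −1`, and `g_n(x) = n!·g_1(x)^n` for `x ≤ 0`, so the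
factorial upper bound on the left is attained. -/
theorem stmt6 (h : ℝ) (hh : 0 < h) (g : ℝ → ℝ)
    (hgdef : g = fun x => if x ≤ -1 then -h else 0)
    (μ : MeasureTheory.Measure ℝ)
    (hμ : ∀ a b : ℝ, a ≤ b → μ (Set.Ico a b) = ENNReal.ofReal (g b - g a)) :
    (∀ n : ℕ, 1 ≤ n → ∀ x : ℝ, -1 < x → gMon μ 0 n x = 0) ∧
    (∀ n : ℕ, ∀ x : ℝ, x ≤ -1 → gMon μ 0 n x = (Nat.factorial n : ℝ) * (-h) ^ n) ∧
    (∀ n : ℕ, ∀ x : ℝ, x ≤ 0 → gMon μ 0 n x = (Nat.factorial n : ℝ) * (gMon μ 0 1 x) ^ n) := by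
  classical
  -- μ is h times the Dirac measure at -1
  have hμeq : μ = (ENNReal.ofReal h) • Measure.dirac (-1) := by
    refine Measure.ext_of_Ico' μ _ (fun a b hab => ?_) (fun a b hab => ?_)
    · rw [hμ a b hab.le]; exact ENNReal.ofReal_ne_top
    · rw [hμ a b hab.le, Measure.smul_apply, Measure.dirac_apply, smul_eq_mul, hgdef]
      by_cases hmem : (-1 : ℝ) ∈ Set.Ico a b
      · rw [Set.indicator_of_mem hmem]
        obtain ⟨ha, hb⟩ := hmem
        have hb' : ¬ (b ≤ -1) := by linarith
        simp [ha, hb']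
      · rw [Set.indicator_of_notMem hmem, mul_zero]
        simp only [Set.mem_Ico, not_and, not_lt] at hmem
        by_cases ha : a ≤ -1
        · have hb : b ≤ -1 := hmem ha
          simp [ha, hb]
        · push_neg at ha
          have ha' : ¬ (a ≤ -1) := by linarith
          have hb' : ¬ (b ≤ -1) := by linarith
          simp [ha', hb']
  -- integrals over Ico against μ
  have key : ∀ (f : ℝ → ℝ) (a b : ℝ),
      (∫ s in Set.Ico a b, f s ∂μ) = if (-1 : ℝ) ∈ Set.Ico a b then h * f (-1) else 0 := by
    intro f a b
    rw [hμeq, Measure.restrict_smul, integral_smul_measure,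
      setIntegral_dirac f (-1) (Set.Ico a b), ENNReal.toReal_ofReal hh.le]
    split_ifs with hm
    · rfl
    · simp
  -- main claims
  have h1 : ∀ x : ℝ, x ≤ -1 → gMon μ 0 1 x = -h := by
    intro x hx
    simp only [gMon, ointeg, Nat.cast_zero, zero_add, one_mul]
    rw [if_neg (by linarith), key]
    rw [if_pos (by constructor <;> [linarith; linarith])]
    ring
  have hzero : ∀ n : ℕ, 1 ≤ n → ∀ x : ℝ, -1 < x → gMon μ 0 n x = 0 := by
    intro n hn x hx
    obtain ⟨m, rfl⟩ := Nat.exists_eq_add_of_le' hn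
    simp only [gMon, ointeg]
    by_cases h0x : (0 : ℝ) ≤ x
    · rw [if_pos h0x, key, if_neg (by intro ⟨h1', h2'⟩; linarith)]
      ring
    · push_neg at h0x
      rw [if_neg (by linarith), key, if_neg (by intro ⟨h1', h2'⟩; linarith)]
      ring
  have hfact : ∀ n : ℕ, ∀ x : ℝ, x ≤ -1 → gMon μ 0 n x = (Nat.factorial n : ℝ) * (-h) ^ n := by
    intro n
    induction n with
    | zero => intro x hx; simp [gMon]
    | succ m ih =>
      intro x hx
      simp only [gMon, ointeg]
      rw [if_neg (by linarith), key, if_pos (by constructor <;> linarith)]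
      rw [ih (-1) le_rfl]
      rw [Nat.factorial_succ]
      push_cast
      ring
  refine ⟨hzero, hfact, ?_⟩
  intro n x hx
  by_cases hx1 : x ≤ -1
  · rw [hfact n x hx1, h1 x hx1]
  · push_neg at hx1
    cases n with
    | zero => simp [gMon]
    | succ m =>
      rw [hzero (m+1) (Nat.le_add_left 1 m) x hx1, hzero 1 le_rfl x hx1]
      rw [zero_pow (Nat.succ_ne_zero m), mul_zero]
end

section
/- If g is a continuous derivator, then for every n ≥ 1 and every x ∈ ℝ, g_n(x) = g_{n−1}(x) · g_1(x); consequently g_n(x) = (g(x) − g(x₀))^n. -/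
open MeasureTheory Set Finset

/-!
For continuous nondecreasing `g`, the push-forward of `μ` restricted to `[a, b)` under `g` is
Lebesgue measure on `[g a, g b)`: the part of `[a, b)` where `g < c` is `[a, β)` for the first
point `β` with `g β = c` (intermediate value theorem), so both measures give `Iio c` the mass
`min c (g b) - g a`. Hence `∫_a^b f ∘ g dμ = ∫_{g a}^{g b} f`, and the recursion defining the
`g`-monomials turns into the one satisfied by the ordinary monomials `(t - g x₀) ^ n`.
-/

section

variable {g : ℝ → ℝ} {a b : ℝ}

lemma Monotone.exists_Ico_inter_preimage_Iio_eq (hg : Monotone g)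
    (hc : ContinuousOn g (Icc a b)) (hab : a ≤ b) {c : ℝ} (hcab : c ∈ Icc (g a) (g b)) :
    ∃ β ∈ Icc a b, g β = c ∧ Ico a b ∩ g ⁻¹' Iio c = Ico a β := by
  have hS : IsCompact (Icc a b ∩ g ⁻¹' {c}) :=
    isCompact_Icc.of_isClosed_subset
      (hc.preimage_isClosed_of_isClosed isClosed_Icc isClosed_singleton) inter_subset_left
  obtain ⟨β, ⟨hβab, hβc : g β = c⟩, hβleast⟩ :=
    hS.exists_isLeast (intermediate_value_Icc hab hc hcab)
  refine ⟨β, hβab, hβc, Set.ext fun s => ⟨fun ⟨hs, hgs⟩ => ⟨hs.1, ?_⟩, fun hs => ⟨?_, ?_⟩⟩⟩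
  · exact lt_of_not_ge fun hβs => by linarith [hg hβs, show g s < c from hgs]
  · exact ⟨hs.1, hs.2.trans_le hβab.2⟩
  · -- a point of `[a, β)` where `g` reached `c` would contradict the minimality of `β`
    refine (hβc ▸ hg hs.2.le).lt_of_ne fun hgs => hs.2.not_ge (hβleast ⟨?_, hgs⟩)
    exact ⟨hs.1, hs.2.le.trans hβab.2⟩

variable {μ : Measure ℝ}

lemma measure_Ico_inter_preimage_Iio (hg : Monotone g) (hc : Continuous g)
    (hμ : ∀ a b : ℝ, a ≤ b → μ (Ico a b) = ENNReal.ofReal (g b - g a)) (hab : a ≤ b) (c : ℝ) :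
    μ (Ico a b ∩ g ⁻¹' Iio c) = ENNReal.ofReal (min c (g b) - g a) := by
  rcases lt_or_ge c (g a) with hca | hac
  · have hempty : Ico a b ∩ g ⁻¹' Iio c = ∅ :=
      eq_empty_of_forall_notMem fun s ⟨hs, hgs⟩ => (hca.trans_le (hg hs.1)).not_gt hgs
    rw [hempty, measure_empty, eq_comm, ENNReal.ofReal_eq_zero]
    linarith [min_le_left c (g b)]
  rcases le_or_gt c (g b) with hcb | hbc
  · obtain ⟨β, hβ, hβc, hset⟩ :=
      hg.exists_Ico_inter_preimage_Iio_eq hc.continuousOn hab ⟨hac, hcb⟩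
    rw [hset, hμ a β hβ.1, hβc, min_eq_left hcb]
  · have hall : Ico a b ∩ g ⁻¹' Iio c = Ico a b :=
      inter_eq_left.2 fun s hs => (hg hs.2.le).trans_lt hbc
    rw [hall, hμ a b hab, min_eq_right hbc.le]

lemma map_restrict_Ico_eq_volume (hg : Monotone g) (hc : Continuous g)
    (hμ : ∀ a b : ℝ, a ≤ b → μ (Ico a b) = ENNReal.ofReal (g b - g a)) (hab : a ≤ b) :
    (μ.restrict (Ico a b)).map g = volume.restrict (Ico (g a) (g b)) := by
  have : IsFiniteMeasure (μ.restrict (Ico a b)) :=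
    isFiniteMeasure_restrict.2 (by rw [hμ a b hab]; exact ENNReal.ofReal_ne_top)
  refine ext_of_generate_finite _ (borel_eq_generateFrom_Iio ℝ) isPiSystem_Iio ?_ ?_
  · rintro - ⟨c, rfl⟩
    rw [Measure.map_apply hc.measurable measurableSet_Iio,
      Measure.restrict_apply (hc.measurable measurableSet_Iio), inter_comm,
      measure_Ico_inter_preimage_Iio hg hc hμ hab, Measure.restrict_apply measurableSet_Iio,
      inter_comm, Ico_inter_Iio, Real.volume_Ico, min_comm]
  · rw [Measure.map_apply hc.measurable MeasurableSet.univ, preimage_univ,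
      Measure.restrict_apply_univ, Measure.restrict_apply_univ, hμ a b hab, Real.volume_Ico]

lemma setIntegral_Ico_comp_eq_intervalIntegral (hg : Monotone g) (hc : Continuous g)
    (hμ : ∀ a b : ℝ, a ≤ b → μ (Ico a b) = ENNReal.ofReal (g b - g a)) (hab : a ≤ b)
    {f : ℝ → ℝ} (hf : Measurable f) :
    ∫ s in Ico a b, f (g s) ∂μ = ∫ t in g a..g b, f t := by
  rw [← integral_map hc.aemeasurable hf.aestronglyMeasurable,
    map_restrict_Ico_eq_volume hg hc hμ hab, intervalIntegral.integral_of_le (hg hab),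
    integral_Ico_eq_integral_Ioc]

lemma ointeg_comp_eq_intervalIntegral (hg : Monotone g) (hc : Continuous g)
    (hμ : ∀ a b : ℝ, a ≤ b → μ (Ico a b) = ENNReal.ofReal (g b - g a))
    {f : ℝ → ℝ} (hf : Measurable f) (a b : ℝ) :
    ointeg μ (fun s => f (g s)) a b = ∫ t in g a..g b, f t := by
  unfold ointeg
  split_ifs with hab
  · exact setIntegral_Ico_comp_eq_intervalIntegral hg hc hμ hab hf
  · rw [setIntegral_Ico_comp_eq_intervalIntegral hg hc hμ (not_le.1 hab).le hf,
      intervalIntegral.integral_symm, neg_neg]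

lemma gMon_eq_pow (hg : Monotone g) (hc : Continuous g)
    (hμ : ∀ a b : ℝ, a ≤ b → μ (Ico a b) = ENNReal.ofReal (g b - g a)) (x₀ : ℝ) (n : ℕ) :
    gMon μ x₀ n = fun x => (g x - g x₀) ^ n := by
  induction n with
  | zero => rfl
  | succ n ih =>
    funext x
    have hf : Measurable fun t : ℝ => (t - g x₀) ^ n := by fun_prop
    rw [gMon, ih]
    dsimp only
    rw [ointeg_comp_eq_intervalIntegral hg hc hμ hf,
      intervalIntegral.integral_comp_sub_right (· ^ n), integral_pow, sub_self,
      zero_pow n.succ_ne_zero, sub_zero, mul_div_cancel₀ _ (by positivity)]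

end

/-- If the derivator `g` is continuous, then for every `n ≥ 1` and every `x`,
`g_n(x) = g_{n−1}(x)·g_1(x)`; consequently `g_n(x) = (g(x) − g(x₀))^n`. -/
theorem stmt8 (g : ℝ → ℝ) (μ : MeasureTheory.Measure ℝ) (x₀ : ℝ)
    (hg : Monotone g) (hc : Continuous g)
    (hμ : ∀ a b : ℝ, a ≤ b → μ (Set.Ico a b) = ENNReal.ofReal (g b - g a)) :
    ∀ n : ℕ, 1 ≤ n → ∀ x : ℝ,
      gMon μ x₀ n x = gMon μ x₀ (n - 1) x * gMon μ x₀ 1 x ∧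
      gMon μ x₀ n x = (g x - g x₀) ^ n := by
  intro n hn x
  have hpow := gMon_eq_pow hg hc hμ x₀
  refine ⟨?_, by rw [hpow]⟩
  simp only [hpow]
  rw [pow_one, ← pow_succ, Nat.sub_add_cancel hn]
end

section
/- Let g be a derivator with g^C = 0 whose discontinuity set D_g consists of isolated points. Then for x > x₀ and n ∈ ℕ, g_n(x)/n! = Σ over all n-element subsets S of D_g ∩ [x₀,x) of Π_{y∈S} Δg(y); in particular g_n(x) = 0 whenever |D_g ∩ [x₀,x)| < n. For x < x₀, g_n(x)/n! = (−1)^n Σ over functions σ : D_g ∩ [x,x₀) → {0,…,n} with Σσ(y) = n of Π_y Δg(y)^{σ(y)}. -/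
open MeasureTheory Set Finset

/-!
When `g^C = 0`, the Stieltjes measure restricted to `[a, b)` is the finite atomic measure
`∑ Δg(y) δ_y` over the jumps `y ∈ [a, b)`, so the recursion `g_{n+1}(x) = (n+1) ∫_{x₀}^x g_n dμ`
becomes a finite sum over jumps. For `x > x₀` it is the recursion
`e_{n+1}(F) = ∑_{y ∈ F} Δg(y) e_n({z ∈ F | z < y})` of elementary symmetric sums (split a subset
at its largest element). For `x < x₀` the orientation contributes the sign, and since `[y, x₀)`
contains `y` itself, the recursion becomes `h_{n+1}(F) = ∑_{y ∈ F} Δg(y) h_n({z ∈ F | y ≤ z})`,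
that of complete homogeneous symmetric sums.
-/

section SymmetricSums

variable {α R : Type*} [CommSemiring R]

def esymmOn (w : α → R) (s : Finset α) (n : ℕ) : R :=
  ∑ S ∈ s.powersetCard n, ∏ y ∈ S, w y

def hsymmOn [DecidableEq α] (w : α → R) (s : Finset α) (n : ℕ) : R :=
  ∑ σ ∈ s.piAntidiag n, ∏ y ∈ s, w y ^ σ y

lemma esymmOn_insert_succ [DecidableEq α] (w : α → R) {a : α} {s : Finset α} (ha : a ∉ s) (n : ℕ) :
    esymmOn w (insert a s) (n + 1) = esymmOn w s (n + 1) + w a * esymmOn w s n := by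
  have hnot : ∀ S ∈ s.powersetCard n, a ∉ S := fun S hS h => ha ((mem_powersetCard.1 hS).1 h)
  rw [esymmOn, powersetCard_succ_insert ha, sum_union, sum_image, esymmOn, esymmOn, mul_sum]
  · exact congrArg _ (sum_congr rfl fun S hS => prod_insert (hnot S hS))
  · intro S hS T hT hST
    simpa [erase_insert (hnot S hS), erase_insert (hnot T hT)] using congrArg (erase · a) hST
  · refine disjoint_right.2 fun S hS hS' => ?_
    obtain ⟨T, -, rfl⟩ := mem_image.1 hS
    exact ha ((mem_powersetCard.1 hS').1 (mem_insert_self a T))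

lemma hsymmOn_insert [DecidableEq α] (w : α → R) {a : α} {s : Finset α} (ha : a ∉ s) (m : ℕ) :
    hsymmOn w (insert a s) m = ∑ p ∈ antidiagonal m, w a ^ p.1 * hsymmOn w s p.2 := by
  rw [hsymmOn, ← cons_eq_insert a s ha, piAntidiag_cons ha, sum_disjiUnion]
  refine sum_congr rfl fun p _ => ?_
  rw [sum_map, hsymmOn, mul_sum]
  refine sum_congr rfl fun σ hσ => ?_
  have hσa : σ a = 0 := by_contra fun h => ha ((mem_piAntidiag.1 hσ).2 a h)
  have hσs : ∀ y ∈ s, y ≠ a := fun y hy h => ha (h ▸ hy)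
  rw [prod_cons]
  simp only [addRightEmbedding_apply, Pi.add_apply, hσa, zero_add]
  exact congrArg _ (prod_congr rfl fun y hy => by simp [hσs y hy])

lemma hsymmOn_insert_succ [DecidableEq α] (w : α → R) {a : α} {s : Finset α} (ha : a ∉ s) (n : ℕ) :
    hsymmOn w (insert a s) (n + 1) = hsymmOn w s (n + 1) + w a * hsymmOn w (insert a s) n := by
  rw [hsymmOn_insert w ha, hsymmOn_insert w ha, Nat.sum_antidiagonal_succ, mul_sum]
  simp only [pow_zero, one_mul, pow_succ']
  exact congrArg _ (sum_congr rfl fun p _ => by ring)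

variable [LinearOrder α]

lemma esymmOn_succ (w : α → R) (s : Finset α) (n : ℕ) :
    esymmOn w s (n + 1) = ∑ y ∈ s, w y * esymmOn w (s.filter (· < y)) n := by
  induction s using Finset.induction_on_max with
  | empty => rw [esymmOn, powersetCard_eq_empty.2 (by simp), sum_empty, sum_empty]
  | insert a s hmax ih =>
    have ha : a ∉ s := fun h => lt_irrefl a (hmax a h)
    rw [esymmOn_insert_succ w ha, sum_insert ha, ih, filter_insert, if_neg (lt_irrefl a),
      filter_true_of_mem hmax, add_comm]
    congr 1
    refine sum_congr rfl fun y hy => ?_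
    rw [filter_insert, if_neg (hmax y hy).not_gt]

lemma hsymmOn_succ [DecidableEq α] (w : α → R) (s : Finset α) (n : ℕ) :
    hsymmOn w s (n + 1) = ∑ y ∈ s, w y * hsymmOn w (s.filter (y ≤ ·)) n := by
  induction s using Finset.induction_on_min with
  | empty => simp [hsymmOn]
  | insert a s hmin ih =>
    have ha : a ∉ s := fun h => lt_irrefl a (hmin a h)
    rw [hsymmOn_insert_succ w ha, sum_insert ha, ih, filter_insert, if_pos le_rfl,
      filter_true_of_mem fun y hy => (hmin y hy).le, add_comm]
    congr 1
    refine sum_congr rfl fun y hy => ?_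
    rw [filter_insert, if_neg (hmin y hy).not_ge]

end SymmetricSums

lemma finsetSum_smul_dirac_apply {α : Type*} [MeasurableSpace α] (s : Finset α) (c : α → ENNReal)
    {A : Set α} [DecidablePred (· ∈ A)] (hA : MeasurableSet A) :
    (∑ y ∈ s, c y • Measure.dirac y) A = ∑ y ∈ s.filter (· ∈ A), c y := by
  rw [Measure.finsetSum_apply, sum_filter]
  exact sum_congr rfl fun y _ => by simp [Measure.dirac_apply' _ hA, Set.indicator_apply]

section JumpsInIntervals

variable {D : Set ℝ} (hfin : ∀ a b, (D ∩ Ico a b).Finite)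
include hfin

lemma toFinset_Ico_filter_mem_Ico (a b c d : ℝ) :
    (hfin a b).toFinset.filter (· ∈ Ico c d) = (hfin (c ⊔ a) (d ⊓ b)).toFinset := by
  ext y
  simp only [mem_filter, Set.Finite.mem_toFinset, mem_inter_iff, Set.mem_Ico, sup_le_iff,
    lt_inf_iff]
  tauto

lemma toFinset_Ico_filter_lt {a b y : ℝ} (hy : y ≤ b) :
    (hfin a b).toFinset.filter (· < y) = (hfin a y).toFinset := by
  ext z
  simp only [mem_filter, Set.Finite.mem_toFinset, mem_inter_iff, Set.mem_Ico]
  constructor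
  · exact fun ⟨⟨hz, haz, _⟩, hzy⟩ => ⟨hz, haz, hzy⟩
  · exact fun ⟨hz, haz, hzy⟩ => ⟨⟨hz, haz, hzy.trans_le hy⟩, hzy⟩

lemma toFinset_Ico_filter_ge {a b y : ℝ} (hy : a ≤ y) :
    (hfin a b).toFinset.filter (y ≤ ·) = (hfin y b).toFinset := by
  ext z
  simp only [mem_filter, Set.Finite.mem_toFinset, mem_inter_iff, Set.mem_Ico]
  constructor
  · exact fun ⟨⟨hz, _, hzb⟩, hyz⟩ => ⟨hz, hyz, hzb⟩
  · exact fun ⟨hz, hyz, hzb⟩ => ⟨⟨hz, hy.trans hyz, hzb⟩, hyz⟩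

end JumpsInIntervals

section AtomicMeasure

variable {μ : Measure ℝ} {D : Set ℝ} {G J : ℝ → ℝ} (hfin : ∀ a b, (D ∩ Ico a b).Finite)
  (hJ : ∀ y ∈ D, 0 ≤ J y) (hμ : ∀ a b, a ≤ b → μ (Ico a b) = ENNReal.ofReal (G b - G a))
  (hpure : ∀ a b, a ≤ b → G b - G a = ∑ y ∈ (hfin a b).toFinset, J y)
include hfin hJ hμ hpure

lemma measure_Ico_eq_sum (a b : ℝ) :
    μ (Ico a b) = ∑ y ∈ (hfin a b).toFinset, ENNReal.ofReal (J y) := by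
  rcases le_or_gt a b with hab | hba
  · rw [hμ a b hab, hpure a b hab, ENNReal.ofReal_sum_of_nonneg]
    exact fun y hy => hJ y ((hfin a b).mem_toFinset.1 hy).1
  · have hempty : (hfin a b).toFinset = ∅ :=
      (hfin a b).toFinset_eq_empty.2 (by rw [Set.Ico_eq_empty hba.not_gt, inter_empty])
    rw [hempty, sum_empty, Set.Ico_eq_empty hba.not_gt, measure_empty]

lemma restrict_Ico_eq_sum_dirac (a b : ℝ) :
    μ.restrict (Ico a b) = ∑ y ∈ (hfin a b).toFinset, ENNReal.ofReal (J y) • Measure.dirac y := by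
  have hIco := measure_Ico_eq_sum hfin hJ hμ hpure
  have : IsFiniteMeasure (μ.restrict (Ico a b)) :=
    ⟨by
      rw [Measure.restrict_apply_univ, hIco]
      exact ENNReal.sum_lt_top.2 fun _ _ => ENNReal.ofReal_lt_top⟩
  refine Measure.ext_of_Ico_finite _ _ ?_ fun c d _ => ?_
  · rw [Measure.restrict_apply_univ, hIco, finsetSum_smul_dirac_apply _ _ MeasurableSet.univ,
      filter_true_of_mem fun _ _ => Set.mem_univ _]
  · rw [Measure.restrict_apply measurableSet_Ico, Set.Ico_inter_Ico, hIco,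
      finsetSum_smul_dirac_apply _ _ measurableSet_Ico, toFinset_Ico_filter_mem_Ico]

lemma setIntegral_Ico_eq_sum (a b : ℝ) (f : ℝ → ℝ) :
    ∫ s in Ico a b, f s ∂μ = ∑ y ∈ (hfin a b).toFinset, f y * J y := by
  rw [restrict_Ico_eq_sum_dirac hfin hJ hμ hpure,
    integral_finsetSum_measure fun y _ => (integrable_dirac enorm_lt_top).smul_measure
      ENNReal.ofReal_ne_top]
  refine sum_congr rfl fun y hy => ?_
  rw [integral_smul_measure, integral_dirac,
    ENNReal.toReal_ofReal (hJ y ((hfin a b).mem_toFinset.1 hy).1), smul_eq_mul, mul_comm]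

end AtomicMeasure

section Monomials

variable {μ : Measure ℝ} {D : Set ℝ} {w : ℝ → ℝ} (hfin : ∀ a b, (D ∩ Ico a b).Finite)
  (hμ : ∀ a b (f : ℝ → ℝ), ∫ s in Ico a b, f s ∂μ = ∑ y ∈ (hfin a b).toFinset, f y * w y)
include hfin hμ

lemma gMon_succ_of_le {x₀ x : ℝ} (hx : x₀ ≤ x) (n : ℕ) :
    gMon μ x₀ (n + 1) x = (n + 1) * ∑ y ∈ (hfin x₀ x).toFinset, gMon μ x₀ n y * w y := by
  simp only [gMon, ointeg, if_pos hx, hμ]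

lemma gMon_succ_of_lt {x₀ x : ℝ} (hx : x < x₀) (n : ℕ) :
    gMon μ x₀ (n + 1) x = -((n + 1) * ∑ y ∈ (hfin x x₀).toFinset, gMon μ x₀ n y * w y) := by
  simp only [gMon, ointeg, if_neg hx.not_ge, hμ, mul_neg]

lemma gMon_eq_factorial_mul_esymmOn {x₀ : ℝ} (n : ℕ) {x : ℝ} (hx : x₀ ≤ x) :
    gMon μ x₀ n x = n.factorial * esymmOn w (hfin x₀ x).toFinset n := by
  induction n generalizing x with
  | zero => simp [gMon, esymmOn]
  | succ n ih =>
    have hterm : ∀ y ∈ (hfin x₀ x).toFinset, gMon μ x₀ n y * w y =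
        n.factorial * (w y * esymmOn w ((hfin x₀ x).toFinset.filter (· < y)) n) := by
      intro y hy
      obtain ⟨-, hx₀y, hyx⟩ := (hfin x₀ x).mem_toFinset.1 hy
      rw [ih hx₀y, toFinset_Ico_filter_lt hfin hyx.le]
      ring
    rw [gMon_succ_of_le hfin hμ hx, sum_congr rfl hterm, ← mul_sum, ← esymmOn_succ,
      Nat.factorial_succ]
    push_cast
    ring

lemma gMon_eq_factorial_mul_hsymmOn [DecidableEq ℝ] {x₀ : ℝ} (n : ℕ) {x : ℝ} (hx : x < x₀) :
    gMon μ x₀ n x = n.factorial * (-1) ^ n * hsymmOn w (hfin x x₀).toFinset n := by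
  induction n generalizing x with
  | zero => simp [gMon, hsymmOn]
  | succ n ih =>
    have hterm : ∀ y ∈ (hfin x x₀).toFinset, gMon μ x₀ n y * w y =
        n.factorial * (-1) ^ n * (w y * hsymmOn w ((hfin x x₀).toFinset.filter (y ≤ ·)) n) := by
      intro y hy
      obtain ⟨-, hxy, hyx₀⟩ := (hfin x x₀).mem_toFinset.1 hy
      rw [ih hyx₀, toFinset_Ico_filter_ge hfin hxy]
      ring
    rw [gMon_succ_of_lt hfin hμ hx, sum_congr rfl hterm, ← mul_sum, ← hsymmOn_succ,
      Nat.factorial_succ]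
    push_cast
    ring

end Monomials

theorem stmt9_general (g : ℝ → ℝ) (μ : MeasureTheory.Measure ℝ) (x₀ : ℝ)
    (hμ : ∀ a b : ℝ, a ≤ b → μ (Set.Ico a b) = ENNReal.ofReal (g b - g a))
    (hfin : ∀ a b : ℝ, ({y : ℝ | 0 < jumpOf g y} ∩ Set.Ico a b).Finite)
    (hpure : ∀ a b : ℝ, a ≤ b → g b - g a = ∑ y ∈ (hfin a b).toFinset, jumpOf g y) :
    (∀ x : ℝ, x₀ < x → ∀ n : ℕ,
      gMon μ x₀ n x / (Nat.factorial n : ℝ) =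
        ∑ S ∈ (hfin x₀ x).toFinset.powersetCard n, ∏ y ∈ S, jumpOf g y) ∧
    (∀ x : ℝ, x₀ < x → ∀ n : ℕ, (hfin x₀ x).toFinset.card < n → gMon μ x₀ n x = 0) ∧
    (∀ x : ℝ, x < x₀ → ∀ n : ℕ,
      gMon μ x₀ n x / (Nat.factorial n : ℝ) =
        (-1) ^ n * ∑ σ ∈ Finset.piAntidiag (hfin x x₀).toFinset n,
          ∏ y ∈ (hfin x x₀).toFinset, jumpOf g y ^ σ y) := by
  have hμ' := setIntegral_Ico_eq_sum hfin (fun _ hy => le_of_lt hy) hμ hpure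
  have hfact : ∀ n : ℕ, (n.factorial : ℝ) ≠ 0 := fun n => Nat.cast_ne_zero.2 n.factorial_ne_zero
  refine ⟨fun x hx n => ?_, fun x hx n hn => ?_, fun x hx n => ?_⟩
  · rw [gMon_eq_factorial_mul_esymmOn hfin hμ' n hx.le, mul_div_cancel_left₀ _ (hfact n), esymmOn]
  · rw [gMon_eq_factorial_mul_esymmOn hfin hμ' n hx.le, esymmOn, powersetCard_eq_empty.2 hn,
      sum_empty, mul_zero]
  · rw [gMon_eq_factorial_mul_hsymmOn hfin hμ' n hx, mul_assoc, mul_div_cancel_left₀ _ (hfact n),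
      hsymmOn]

/-- Explicit `g`-monomials for a purely atomic derivator (`g^C = 0`) whose jump set
`D_g = {y : 0 < Δg y}` is a set of isolated points (hence finite on bounded intervals).
For `x > x₀`: `g_n(x)/n! = Σ_{S ⊆ D_g∩[x₀,x), |S| = n} Π_{y∈S} Δg(y)`, so `g_n(x) = 0`
whenever `|D_g∩[x₀,x)| < n`. For `x < x₀`:
`g_n(x)/n! = (−1)^n Σ_{σ : D_g∩[x,x₀) → ℕ, Σσ = n} Π_y Δg(y)^{σ(y)}`. -/
theorem stmt9 (g : ℝ → ℝ) (μ : MeasureTheory.Measure ℝ) (x₀ : ℝ)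
    (hg : Monotone g) (hlc : ∀ x : ℝ, ContinuousWithinAt g (Set.Iio x) x)
    (hμ : ∀ a b : ℝ, a ≤ b → μ (Set.Ico a b) = ENNReal.ofReal (g b - g a))
    (hiso : ∀ y : ℝ, 0 < jumpOf g y →
      ∃ ε > (0 : ℝ), ∀ z ∈ Set.Ioo (y - ε) (y + ε), 0 < jumpOf g z → z = y)
    (hfin : ∀ a b : ℝ, ({y : ℝ | 0 < jumpOf g y} ∩ Set.Ico a b).Finite)
    (hpure : ∀ a b : ℝ, a ≤ b → g b - g a = ∑ y ∈ (hfin a b).toFinset, jumpOf g y) :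
    (∀ x : ℝ, x₀ < x → ∀ n : ℕ,
      gMon μ x₀ n x / (Nat.factorial n : ℝ) =
        ∑ S ∈ (hfin x₀ x).toFinset.powersetCard n, ∏ y ∈ S, jumpOf g y) ∧
    (∀ x : ℝ, x₀ < x → ∀ n : ℕ, (hfin x₀ x).toFinset.card < n → gMon μ x₀ n x = 0) ∧
    (∀ x : ℝ, x < x₀ → ∀ n : ℕ,
      gMon μ x₀ n x / (Nat.factorial n : ℝ) =
        (-1) ^ n * ∑ σ ∈ Finset.piAntidiag (hfin x x₀).toFinset n,
          ∏ y ∈ (hfin x x₀).toFinset, jumpOf g y ^ σ y) :=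
  stmt9_general g μ x₀ hμ hfin hpure
end

section
/- Let g be a derivator whose discontinuity set is a set of isolated points, x₀ ∈ ℝ. Then for all n, m ∈ ℕ and all x ∈ ℝ: m ∫_{x₀}^{x} g_n^C g_{m−1}^B dμ_{g^B} + n ∫_{x₀}^{x} g_{n−1}^C g_m^B dμ_{g^C} = g_m^B(x) · g_n^C(x). -/
open MeasureTheory Set Finset

/-- The accumulated jump function `g^B` of `g`: `g^B(x) = Σ_{t∈[0,x)} Δg(t)` for `x ≥ 0`
and `g^B(x) = −Σ_{t∈[x,0)} Δg(t)` for `x < 0`. -/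
noncomputable def jumpPart (g : ℝ → ℝ) (x : ℝ) : ℝ :=
  if 0 ≤ x then ∑' t : (Set.Ico (0:ℝ) x), jumpOf g (t : ℝ)
  else - ∑' t : (Set.Ico x (0:ℝ)), jumpOf g (t : ℝ)

/-!
Let `I` be the interval between `x₀` and `x`, `φ = g^B_{m-1}` and `ψ = g^C_{n-1}`. Up to the
factors `m` and `n`, the right-hand side is `(∫_I φ dμ_{g^B}) (∫_I ψ dμ_{g^C})`, the integral of
`φ(s) ψ(t)` over the square `I × I`. The diagonal cuts the square into the triangles `t < s` and
`s < t`, and Fubini turns the integrals over the triangles into the two terms on the left. The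
diagonal itself is negligible because `μ_{g^C}` has no atoms: `g^B` carries every jump of `g`.
-/

section Tournament

variable {α : Type*} [MeasurableSpace α] {μ ν : Measure α} [SFinite μ] [SFinite ν]

theorem integral_indicator_mul_prod {R : Set (α × α)} (hR : MeasurableSet R) {φ ψ : α → ℝ}
    (hφ : Integrable φ μ) (hψ : Integrable ψ ν) :
    ∫ p, R.indicator (fun p => φ p.1 * ψ p.2) p ∂μ.prod ν =
      ∫ s, φ s * ∫ t in Prod.mk s ⁻¹' R, ψ t ∂ν ∂μ := by
  rw [integral_prod _ ((hφ.mul_prod hψ).indicator hR)]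
  congr 1 with s
  have hsec : (fun t => R.indicator (fun p => φ p.1 * ψ p.2) (s, t)) =
      (Prod.mk s ⁻¹' R).indicator (fun t => φ s * ψ t) := by
    ext t; by_cases h : (s, t) ∈ R <;> simp [Set.indicator, h]
  rw [hsec, integral_indicator (measurable_prodMk_left hR), integral_const_mul]

theorem integral_mul_integral_eq_add_of_tournament [MeasurableEq α] [NullSingletonClass ν]
    {R : Set (α × α)} (hR : MeasurableSet R)
    (htot : ∀ s t, s ≠ t → ((s, t) ∈ R ↔ (t, s) ∉ R)) {φ ψ : α → ℝ}
    (hφ : Integrable φ μ) (hψ : Integrable ψ ν) :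
    (∫ s, φ s * ∫ t in Prod.mk s ⁻¹' R, ψ t ∂ν ∂μ) +
        ∫ t, ψ t * ∫ s in Prod.mk t ⁻¹' R, φ s ∂μ ∂ν =
      (∫ s, φ s ∂μ) * ∫ t, ψ t ∂ν := by
  set f : α × α → ℝ := fun p => φ p.1 * ψ p.2
  have hf : Integrable f (μ.prod ν) := hφ.mul_prod hψ
  have hswap : ∫ p, (Prod.swap ⁻¹' R).indicator f p ∂μ.prod ν =
      ∫ t, ψ t * ∫ s in Prod.mk t ⁻¹' R, φ s ∂μ ∂ν := by
    rw [← integral_prod_swap, ← integral_indicator_mul_prod hR hψ hφ]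
    congr 1 with q
    by_cases h : q ∈ R <;> simp [Set.indicator, h, f, mul_comm]
  have hdiag : μ.prod ν (diagonal α) = 0 := by
    refine (Measure.measure_prod_null measurableSet_diagonal).2 (ae_of_all _ fun s => ?_)
    have hsec : Prod.mk s ⁻¹' diagonal α = {s} := by ext t; simp [eq_comm]
    simp [hsec]
  have hsplit : R.indicator f + (Prod.swap ⁻¹' R).indicator f =ᵐ[μ.prod ν] f := by
    filter_upwards [measure_eq_zero_iff_ae_notMem.1 hdiag] with p hp
    have hne : p.1 ≠ p.2 := hp
    by_cases h : p ∈ R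
    · have h' : p.swap ∉ R := (htot _ _ hne).1 h
      simp [Set.indicator, h, h']
    · have h' : p.swap ∈ R := by
        by_contra h'; exact h ((htot _ _ hne).2 h')
      simp [Set.indicator, h, h']
  calc (∫ s, φ s * ∫ t in Prod.mk s ⁻¹' R, ψ t ∂ν ∂μ) +
        ∫ t, ψ t * ∫ s in Prod.mk t ⁻¹' R, φ s ∂μ ∂ν
      = ∫ p, (R.indicator f + (Prod.swap ⁻¹' R).indicator f) p ∂μ.prod ν := by
        rw [← integral_indicator_mul_prod hR hφ hψ, ← hswap, ← integral_add
          (hf.indicator hR) (hf.indicator (measurable_swap hR))]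
        rfl
    _ = ∫ p, f p ∂μ.prod ν := integral_congr_ae hsplit
    _ = (∫ s, φ s ∂μ) * ∫ t, ψ t ∂ν := integral_prod_mul φ ψ

end Tournament

section OrientedIntegral

variable {μ ν : Measure ℝ} {f f' φ ψ : ℝ → ℝ} {c x : ℝ}

theorem ointeg_const_mul (r : ℝ) : ointeg μ (fun s => r * f s) c x = r * ointeg μ f c x := by
  unfold ointeg; split_ifs <;> simp [integral_const_mul]

theorem ointeg_sub (hf : ∀ a b, IntegrableOn f (Ico a b) μ)
    (hf' : ∀ a b, IntegrableOn f' (Ico a b) μ) :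
    ointeg μ (fun s => f s - f' s) c x = ointeg μ f c x - ointeg μ f' c x := by
  unfold ointeg; split_ifs <;> simp [integral_sub (hf _ _) (hf' _ _)]; ring

theorem monotone_ointeg (hf₀ : ∀ s, 0 ≤ f s) (hf : ∀ a b, IntegrableOn f (Ico a b) μ) :
    Monotone (ointeg μ f c) := by
  intro u v huv
  have hmono : ∀ {a b a' b'}, a' ≤ a → b ≤ b' →
      ∫ s in Ico a b, f s ∂μ ≤ ∫ s in Ico a' b', f s ∂μ := fun ha hb =>
    setIntegral_mono_set (hf _ _) (ae_of_all _ hf₀) (Ico_subset_Ico ha hb).eventuallyLE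
  have hpos : ∀ a b, 0 ≤ ∫ s in Ico a b, f s ∂μ := fun _ _ => setIntegral_nonneg measurableSet_Ico
    fun s _ => hf₀ s
  unfold ointeg
  split_ifs with hu hv hv
  · exact hmono le_rfl huv
  · exact absurd (hu.trans huv) hv
  · linarith [hpos u c, hpos c v]
  · exact neg_le_neg (hmono huv le_rfl)

theorem ointeg_mul_ointeg [NullSingletonClass ν] (hμ : ∀ a b, μ (Ico a b) ≠ ⊤)
    (hν : ∀ a b, ν (Ico a b) ≠ ⊤) (hφ : ∀ a b, IntegrableOn φ (Ico a b) μ)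
    (hψ : ∀ a b, IntegrableOn ψ (Ico a b) ν) :
    ointeg μ (fun s => φ s * ointeg ν ψ c s) c x + ointeg ν (fun t => ψ t * ointeg μ φ c t) c x =
      ointeg μ φ c x * ointeg ν ψ c x := by
  have tournament (a b : ℝ) {R : Set (ℝ × ℝ)} (hR : MeasurableSet R)
      (htot : ∀ s t, s ≠ t → ((s, t) ∈ R ↔ (t, s) ∉ R)) :=
    have := isFiniteMeasure_restrict.2 (hμ a b)
    have := isFiniteMeasure_restrict.2 (hν a b)
    integral_mul_integral_eq_add_of_tournament (μ := μ.restrict (Ico a b))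
      hR htot (hφ a b) (hψ a b)
  unfold ointeg
  rcases le_or_gt c x with hcx | hxc
  · have hR : MeasurableSet {p : ℝ × ℝ | p.2 < p.1} :=
      measurableSet_lt measurable_snd measurable_fst
    have key := tournament c x hR fun s t hst => by
      simp only [mem_ofPred_eq, not_lt]; exact ⟨le_of_lt, (lt_of_le_of_ne · hst.symm)⟩
    have hsec (s) (hs : s ∈ Ico c x) : Prod.mk s ⁻¹' {p | p.2 < p.1} ∩ Ico c x = Ico c s := by
      ext t; simp only [mem_inter_iff, Set.mem_preimage, Set.mem_Ico]
      constructor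
      · rintro ⟨hts, hct, -⟩; exact ⟨hct, hts⟩
      · rintro ⟨hct, hts⟩; exact ⟨hts, hct, hts.trans hs.2⟩
    simp only [if_pos hcx]
    rw [← key]
    congr 1 <;> refine setIntegral_congr_fun measurableSet_Ico fun s hs => ?_ <;>
      simp only [Measure.restrict_restrict (measurable_prodMk_left hR), hsec s hs, if_pos hs.1]
  · have hR : MeasurableSet {p : ℝ × ℝ | p.1 ≤ p.2} :=
      measurableSet_le measurable_fst measurable_snd
    have key := tournament x c hR fun s t hst => by
      simp only [mem_ofPred_eq, not_le]; exact ⟨(lt_of_le_of_ne · hst), le_of_lt⟩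
    have hsec (s) (hs : s ∈ Ico x c) : Prod.mk s ⁻¹' {p | p.1 ≤ p.2} ∩ Ico x c = Ico s c := by
      ext t; simp only [mem_inter_iff, Set.mem_preimage, Set.mem_Ico]
      constructor
      · rintro ⟨hst, -, htc⟩; exact ⟨hst, htc⟩
      · rintro ⟨hst, htc⟩; exact ⟨hst, hs.1.trans hst, htc⟩
    simp only [if_neg hxc.not_ge]
    rw [neg_mul_neg, ← key]
    congr 1 <;> rw [← integral_neg] <;>
      refine setIntegral_congr_fun measurableSet_Ico fun s hs => ?_ <;>
      simp only [Measure.restrict_restrict (measurable_prodMk_left hR), hsec s hs,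
        if_neg hs.2.not_ge, mul_neg, neg_neg]

end OrientedIntegral

section Monomials

variable {μ : Measure ℝ}

theorem integrableOn_Ico_of_monotone (hμ : ∀ a b, μ (Ico a b) ≠ ⊤) {F : ℝ → ℝ}
    (hF : Monotone F) (a b : ℝ) : IntegrableOn F (Ico a b) μ := by
  rcases le_or_gt a b with hab | hba
  · have hIcc : μ (Icc a b) ≠ ⊤ :=
      ne_top_of_le_ne_top (hμ a (b + 1)) (measure_mono (Icc_subset_Ico_right (lt_add_one b)))
    exact ((hF.monotoneOn _).integrableOn_of_measure_ne_top (isLeast_Icc hab)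
      (isGreatest_Icc hab) hIcc measurableSet_Icc).mono_set Ico_subset_Icc_self
  · simp [Set.Ico_eq_empty hba.not_gt]

theorem gMon_succ_s11 (c : ℝ) (k : ℕ) (x : ℝ) :
    gMon μ c (k + 1) x = ((k : ℝ) + 1) * ointeg μ (gMon μ c k) c x := rfl

/-- Splitting `gMon μ c k` into positive and negative parts writes `gMon μ c (k + 1)` as a
difference of two monotone integrals. -/
theorem exists_monotone_sub_eq_gMon (hμ : ∀ a b, μ (Ico a b) ≠ ⊤) (c : ℝ) (k : ℕ) :
    ∃ F G : ℝ → ℝ, Monotone F ∧ Monotone G ∧ gMon μ c k = F - G := by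
  induction k with
  | zero => exact ⟨1, 0, monotone_const, monotone_const, by ext; simp [gMon]⟩
  | succ k ih =>
    obtain ⟨F, G, hF, hG, hk⟩ := ih
    set f := gMon μ c k
    have hf (a b : ℝ) : IntegrableOn f (Ico a b) μ := by
      rw [hk]; exact (integrableOn_Ico_of_monotone hμ hF a b).sub
        (integrableOn_Ico_of_monotone hμ hG a b)
    have hk₀ : (0 : ℝ) ≤ k + 1 := by positivity
    refine ⟨fun x => (k + 1) * ointeg μ (fun s => max (f s) 0) c x,
      fun x => (k + 1) * ointeg μ (fun s => max (-f s) 0) c x,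
      (monotone_ointeg (fun _ => le_max_right _ _) fun a b => (hf a b).pos_part).const_mul hk₀,
      (monotone_ointeg (fun _ => le_max_right _ _) fun a b => (hf a b).neg.pos_part).const_mul hk₀,
      ?_⟩
    ext x
    rw [gMon_succ_s11, Pi.sub_apply, ← mul_sub, ← ointeg_sub (f' := fun s => max (-f s) 0)
      (fun a b => (hf a b).pos_part) (fun a b => (hf a b).neg.pos_part)]
    simp only [max_zero_sub_eq_self, f]

theorem integrableOn_gMon (hμ : ∀ a b, μ (Ico a b) ≠ ⊤) (c : ℝ) (k : ℕ) (a b : ℝ) :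
    IntegrableOn (gMon μ c k) (Ico a b) μ := by
  obtain ⟨F, G, hF, hG, hk⟩ := exists_monotone_sub_eq_gMon hμ c k
  rw [hk]
  exact (integrableOn_Ico_of_monotone hμ hF a b).sub (integrableOn_Ico_of_monotone hμ hG a b)

end Monomials

section JumpPart

variable {g : ℝ → ℝ}

theorem jumpOf_nonneg (hg : Monotone g) (y : ℝ) : 0 ≤ jumpOf g y :=
  sub_nonneg.2 (hg.le_rightLim le_rfl)

variable (hg : Monotone g) (hfin : ∀ a b : ℝ, ({y : ℝ | 0 < jumpOf g y} ∩ Ico a b).Finite)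
include hg hfin

theorem summable_jumpOf_Ico (a b : ℝ) : Summable fun t : Ico a b => jumpOf g t := by
  refine summable_of_hasFiniteSupport
    (((hfin a b).preimage Subtype.val_injective.injOn).subset fun t ht => ?_)
  exact ⟨(jumpOf_nonneg hg t).lt_of_ne' ht, t.2⟩

theorem tsum_jumpOf_Ico_add {a b c : ℝ} (hac : a ≤ c) (hcb : c ≤ b) :
    (∑' t : Ico a c, jumpOf g t) + ∑' t : Ico c b, jumpOf g t = ∑' t : Ico a b, jumpOf g t := by
  rw [← Ico_union_Ico_eq_Ico hac hcb]
  exact (Summable.tsum_union_disjoint (f := jumpOf g) Ico_disjoint_Ico_same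
    (summable_jumpOf_Ico hg hfin a c) (summable_jumpOf_Ico hg hfin c b)).symm

theorem jumpPart_sub_jumpPart {a b : ℝ} (hab : a ≤ b) :
    jumpPart g b - jumpPart g a = ∑' t : Ico a b, jumpOf g t := by
  unfold jumpPart
  rcases le_or_gt 0 a with h0a | h0a
  · rw [if_pos (h0a.trans hab), if_pos h0a, ← tsum_jumpOf_Ico_add hg hfin h0a hab]; ring
  rcases le_or_gt 0 b with h0b | h0b
  · rw [if_pos h0b, if_neg h0a.not_ge, ← tsum_jumpOf_Ico_add hg hfin h0a.le h0b]; ring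
  · rw [if_neg h0b.not_ge, if_neg h0a.not_ge, ← tsum_jumpOf_Ico_add hg hfin hab h0b.le]; ring

theorem jumpOf_le_jumpPart_sub {t b : ℝ} (htb : t < b) :
    jumpOf g t ≤ jumpPart g b - jumpPart g t := by
  rw [jumpPart_sub_jumpPart hg hfin htb.le]
  exact (summable_jumpOf_Ico hg hfin t b).le_tsum ⟨t, le_rfl, htb⟩ fun j _ => jumpOf_nonneg hg j

/-- `μ {t} ≤ μ [t, b) ≤ g b - g (t⁺) → 0` as `b ↓ t`. -/
theorem nullSingletonClass_of_continuousPart {μ : Measure ℝ}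
    (hμ : ∀ a b : ℝ, a ≤ b →
      μ (Ico a b) = ENNReal.ofReal ((g b - jumpPart g b) - (g a - jumpPart g a))) :
    NullSingletonClass μ := by
  refine ⟨fun t => nonpos_iff_eq_zero.1 ?_⟩
  have hbound : ∀ b ∈ Ioi t, μ {t} ≤ ENNReal.ofReal (g b - Function.rightLim g t) := by
    intro b hb
    calc μ {t} ≤ μ (Ico t b) := measure_mono (singleton_subset_iff.2 ⟨le_rfl, hb⟩)
      _ = _ := hμ t b (le_of_lt hb)
      _ ≤ _ := ENNReal.ofReal_le_ofReal (by
        linarith [jumpOf_le_jumpPart_sub hg hfin (show t < b from hb),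
          show jumpOf g t = Function.rightLim g t - g t from rfl])
  have hlim : Filter.Tendsto (fun b => ENNReal.ofReal (g b - Function.rightLim g t))
      (nhdsWithin t (Ioi t)) (nhds 0) := by
    simpa using ENNReal.tendsto_ofReal ((hg.tendsto_rightLim t).sub_const (Function.rightLim g t))
  exact ge_of_tendsto hlim (eventually_nhdsWithin_of_forall hbound)

end JumpPart

theorem measure_Ico_ne_top_of_eq_ofReal {μ : Measure ℝ} {F : ℝ → ℝ}
    (hμ : ∀ a b : ℝ, a ≤ b → μ (Ico a b) = ENNReal.ofReal (F b - F a)) (a b : ℝ) :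
    μ (Ico a b) ≠ ⊤ := by
  rcases le_or_gt a b with hab | hba
  · simp [hμ a b hab]
  · simp [Set.Ico_eq_empty hba.not_gt]

theorem stmt11_general (g : ℝ → ℝ)
    (hg : Monotone g)
    (hfin : ∀ a b : ℝ, ({y : ℝ | 0 < jumpOf g y} ∩ Set.Ico a b).Finite)
    (μB μC : MeasureTheory.Measure ℝ)
    (hμB : ∀ a b : ℝ, a ≤ b →
      μB (Set.Ico a b) = ENNReal.ofReal (jumpPart g b - jumpPart g a))
    (hμC : ∀ a b : ℝ, a ≤ b →
      μC (Set.Ico a b) = ENNReal.ofReal ((g b - jumpPart g b) - (g a - jumpPart g a)))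
    (x₀ : ℝ) :
    ∀ n m : ℕ, 1 ≤ n → 1 ≤ m → ∀ x : ℝ,
      (m : ℝ) * ointeg μB (fun s => gMon μC x₀ n s * gMon μB x₀ (m - 1) s) x₀ x +
      (n : ℝ) * ointeg μC (fun s => gMon μC x₀ (n - 1) s * gMon μB x₀ m s) x₀ x =
      gMon μB x₀ m x * gMon μC x₀ n x := by
  intro n m hn hm x
  obtain ⟨N, rfl⟩ := Nat.exists_eq_add_one_of_ne_zero (Nat.one_le_iff_ne_zero.1 hn)
  obtain ⟨M, rfl⟩ := Nat.exists_eq_add_one_of_ne_zero (Nat.one_le_iff_ne_zero.1 hm)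
  have hB := measure_Ico_ne_top_of_eq_ofReal hμB
  have hC := measure_Ico_ne_top_of_eq_ofReal hμC
  have := nullSingletonClass_of_continuousPart hg hfin hμC
  set φ := gMon μB x₀ M
  set ψ := gMon μC x₀ N
  have hBC : ointeg μB (fun s => gMon μC x₀ (N + 1) s * φ s) x₀ x =
      (N + 1) * ointeg μB (fun s => φ s * ointeg μC ψ x₀ s) x₀ x := by
    rw [← ointeg_const_mul]; congr 1 with s; rw [gMon_succ_s11]; ring
  have hCB : ointeg μC (fun t => ψ t * gMon μB x₀ (M + 1) t) x₀ x =
      (M + 1) * ointeg μC (fun t => ψ t * ointeg μB φ x₀ t) x₀ x := by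
    rw [← ointeg_const_mul]; congr 1 with t; rw [gMon_succ_s11]; ring
  simp only [Nat.add_sub_cancel, Nat.cast_add, Nat.cast_one]
  rw [hBC, hCB, gMon_succ_s11, gMon_succ_s11]
  linear_combination ((M : ℝ) + 1) * (N + 1) *
    ointeg_mul_ointeg (c := x₀) (x := x) hB hC (integrableOn_gMon hB x₀ M)
      (integrableOn_gMon hC x₀ N)

/-- Integration-by-parts identity between monomials of the continuous part `g^C = g − g^B`
and of the jump part `g^B`, for a derivator whose discontinuity set is a set of isolated
points: `m ∫_{x₀}^{x} g_n^C g_{m−1}^B dμ_{g^B} + n ∫_{x₀}^{x} g_{n−1}^C g_m^B dμ_{g^C}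
= g_m^B(x) · g_n^C(x)`. -/
theorem stmt11 (g : ℝ → ℝ)
    (hg : Monotone g) (hlc : ∀ x : ℝ, ContinuousWithinAt g (Set.Iio x) x)
    (hiso : ∀ y : ℝ, 0 < jumpOf g y →
      ∃ ε > (0 : ℝ), ∀ z ∈ Set.Ioo (y - ε) (y + ε), 0 < jumpOf g z → z = y)
    (hfin : ∀ a b : ℝ, ({y : ℝ | 0 < jumpOf g y} ∩ Set.Ico a b).Finite)
    (μB μC : MeasureTheory.Measure ℝ)
    (hμB : ∀ a b : ℝ, a ≤ b →
      μB (Set.Ico a b) = ENNReal.ofReal (jumpPart g b - jumpPart g a))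
    (hμC : ∀ a b : ℝ, a ≤ b →
      μC (Set.Ico a b) = ENNReal.ofReal ((g b - jumpPart g b) - (g a - jumpPart g a)))
    (x₀ : ℝ) :
    ∀ n m : ℕ, 1 ≤ n → 1 ≤ m → ∀ x : ℝ,
      (m : ℝ) * ointeg μB (fun s => gMon μC x₀ n s * gMon μB x₀ (m - 1) s) x₀ x +
      (n : ℝ) * ointeg μC (fun s => gMon μC x₀ (n - 1) s * gMon μB x₀ m s) x₀ x =
      gMon μB x₀ m x * gMon μC x₀ n x :=
  stmt11_general g hg hfin μB μC hμB hμC x₀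
end
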